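/- arXiv:2503.18779 — 8 statements merged into one kernel-verified Lean document; each statement's English description precedes it below -/
import Mathlib

section
/- Let μ be a finite Borel measure with finite p-th moment on a Polish space X, p ∈ [1,∞), and (S_k) closed nonempty subsets with e_p(μ; S_k) → 0. Then d(·, S_k) → 0 uniformly on every compact subset K of the support of μ. -/
open MeasureTheory Filter Metric Set
open scoped ENNReal NNReal Topology

noncomputable def quantErr {X : Type*} [MetricSpace X] [MeasurableSpace X]
    (μ : Measure X) (p : ℝ) (S : Set X) : ℝ≥0∞ :=
  (∫⁻ x, ENNReal.ofReal (infDist x S ^ p) ∂μ) ^ (1 / p)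

noncomputable def quantErrN {X : Type*} [MetricSpace X] [MeasurableSpace X]
    (μ : Measure X) (p : ℝ) (N : ℕ) : ℝ≥0∞ :=
  ⨅ (S : Finset X) (_ : S.Nonempty) (_ : S.card ≤ N), quantErr μ p (S : Set X)

noncomputable def upperQuantCoeff {X : Type*} [MetricSpace X] [MeasurableSpace X]
    (μ : Measure X) (p s : ℝ) : ℝ≥0∞ :=
  Filter.limsup (fun N : ℕ => (N : ℝ≥0∞) ^ (1 / s) * quantErrN μ p N) Filter.atTop

/-- vanishing quantization error implies uniform convergence of the
distance functions on compact subsets of the support of the measure. -/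
theorem stmt_4 {X : Type*} [MetricSpace X] [CompleteSpace X]
    [TopologicalSpace.SeparableSpace X] [MeasurableSpace X] [BorelSpace X]
    (μ : Measure X) [IsFiniteMeasure μ] (p : ℝ) (hp : 1 ≤ p)
    (hmom : ∃ x₀ : X, ∫⁻ x, ENNReal.ofReal (dist x x₀ ^ p) ∂μ < ⊤)
    (S : ℕ → Set X) (hne : ∀ k, (S k).Nonempty) (hcl : ∀ k, IsClosed (S k))
    (hQ : Tendsto (fun k => quantErr μ p (S k)) atTop (𝓝 0))
    (K : Set X) (hK : IsCompact K)
    (hKsupp : K ⊆ {x : X | ∀ r : ℝ, 0 < r → 0 < μ (ball x r)}) :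
    TendstoUniformlyOn (fun k x => infDist x (S k)) (fun _ => 0) atTop K := by
  rw [Metric.tendstoUniformlyOn_iff]
  intro ε hε
  have hp0 : 0 < p := lt_of_lt_of_le one_pos hp
  obtain ⟨t, htK, htfin, htcov⟩ := hK.elim_finite_subcover_image
    (c := fun x => ball x (ε/4)) (b := K) (fun x _ => isOpen_ball)
    (fun x hx => mem_biUnion hx (mem_ball_self (by linarith)))
  set c : ℝ≥0∞ := htfin.toFinset.inf (fun z => μ (ball z (ε/4))) with hc
  have hcpos : 0 < c := by
    rw [hc, Finset.lt_inf_iff (by simp : (0:ℝ≥0∞) < ⊤)]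
    intro z hz
    exact hKsupp (htK (htfin.mem_toFinset.mp hz)) (ε/4) (by linarith)
  set δ : ℝ≥0∞ := (ENNReal.ofReal ((ε/2) ^ p) * c) ^ (1/p) with hδ
  have hδpos : 0 < δ := by
    apply ENNReal.rpow_pos_of_nonneg
    · exact ENNReal.mul_pos (ENNReal.ofReal_pos.mpr (Real.rpow_pos_of_pos (by linarith) p)).ne' hcpos.ne'
    · positivity
  filter_upwards [hQ.eventually_lt_const hδpos] with k hk x hx
  have h0 : 0 ≤ infDist x (S k) := infDist_nonneg
  rw [dist_comm, Real.dist_eq, sub_zero, abs_of_nonneg h0]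
  by_contra hcon
  push_neg at hcon
  obtain ⟨z, hzt, hxz⟩ := mem_iUnion₂.mp (htcov hx)
  -- every point of ball z (ε/4) has infDist ≥ ε/2
  have key : ∀ y ∈ ball z (ε/4), ENNReal.ofReal ((ε/2) ^ p) ≤ ENNReal.ofReal (infDist y (S k) ^ p) := by
    intro y hy
    have hxy : dist x y < ε/2 := by
      have h1 : dist x z < ε/4 := hxz
      have h2 : dist z y < ε/4 := by rw [dist_comm]; exact hy
      calc dist x y ≤ dist x z + dist z y := dist_triangle x z y
        _ < ε/2 := by linarith
    have h3 : ε/2 ≤ infDist y (S k) := by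
      have := infDist_le_infDist_add_dist (x := x) (y := y) (s := S k)
      linarith
    exact ENNReal.ofReal_le_ofReal (Real.rpow_le_rpow (by linarith) h3 hp0.le)
  have hzt' : z ∈ htfin.toFinset := htfin.mem_toFinset.mpr hzt
  have hlb : δ ≤ quantErr μ p (S k) := by
    rw [hδ, quantErr]
    apply ENNReal.rpow_le_rpow _ (by positivity)
    calc ENNReal.ofReal ((ε/2) ^ p) * c
        ≤ ENNReal.ofReal ((ε/2) ^ p) * μ (ball z (ε/4)) := by
          exact mul_le_mul_right (Finset.inf_le hzt') _
      _ = ∫⁻ y in ball z (ε/4), ENNReal.ofReal ((ε/2) ^ p) ∂μ := by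
          rw [setLIntegral_const, mul_comm]
      _ ≤ ∫⁻ y in ball z (ε/4), ENNReal.ofReal (infDist y (S k) ^ p) ∂μ :=
          setLIntegral_mono' measurableSet_ball key
      _ ≤ ∫⁻ y, ENNReal.ofReal (infDist y (S k) ^ p) ∂μ :=
          setLIntegral_le_lintegral _ _
  exact absurd hk (not_lt.mpr hlb)
end

section
/- Let p ∈ [1,∞), s > 0, and let μ₁, μ₂ be finite Borel measures with finite p-th moments on a Polish space X, with μ = μ₁ + μ₂. For any t₁, t₂ ∈ (0,1) with t₁ + t₂ = 1, the upper quantization coefficients satisfy Q̄_{p,s}(μ)^p ≤ t₁^{-p/s} Q̄_{p,s}(μ₁)^p + t₂^{-p/s} Q̄_{p,s}(μ₂)^p, where Q̄_{p,s}(ν) = limsup_{N→∞} N^{1/s} e_{N,p}(ν). -/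
open MeasureTheory Filter Metric Set
open scoped ENNReal NNReal Topology

private lemma rpow_iInf' {ι : Sort*} (f : ι → ℝ≥0∞) {p : ℝ} (hp : 0 < p) :
    (⨅ i, f i) ^ p = ⨅ i, f i ^ p := by
  refine le_antisymm (le_iInf fun i => ENNReal.rpow_le_rpow (iInf_le f i) hp.le) ?_
  have h2 : (⨅ i, f i ^ p) ^ (1 / p) ≤ ⨅ i, f i := by
    refine le_iInf fun i => ?_
    have h := ENNReal.rpow_le_rpow (iInf_le (fun i => f i ^ p) i)
      (by positivity : (0:ℝ) ≤ 1 / p)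
    rwa [← ENNReal.rpow_mul, mul_one_div, div_self hp.ne', ENNReal.rpow_one] at h
  calc (⨅ i, f i ^ p) = ((⨅ i, f i ^ p) ^ (1 / p)) ^ p := by
        rw [← ENNReal.rpow_mul, one_div, inv_mul_cancel₀ hp.ne', ENNReal.rpow_one]
    _ ≤ (⨅ i, f i) ^ p := ENNReal.rpow_le_rpow h2 hp.le

private lemma quantErr_pow {X : Type*} [MetricSpace X] [MeasurableSpace X]
    (μ : Measure X) {p : ℝ} (hp : p ≠ 0) (S : Set X) :
    quantErr μ p S ^ p = ∫⁻ x, ENNReal.ofReal (infDist x S ^ p) ∂μ := by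
  rw [quantErr, ← ENNReal.rpow_mul, one_div, inv_mul_cancel₀ hp, ENNReal.rpow_one]

private lemma key_split {X : Type*} [MetricSpace X] [MeasurableSpace X]
    (μ₁ μ₂ : Measure X) {p : ℝ} (hp : 0 < p) {N N₁ N₂ : ℕ} (hN : N₁ + N₂ ≤ N) :
    quantErrN (μ₁ + μ₂) p N ^ p ≤ quantErrN μ₁ p N₁ ^ p + quantErrN μ₂ p N₂ ^ p := by
  have unfold : ∀ (μ : Measure X) (M : ℕ), quantErrN μ p M ^ p =
      ⨅ (S : Finset X) (_ : S.Nonempty) (_ : S.card ≤ M), quantErr μ p (S : Set X) ^ p := by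
    intro μ M
    rw [quantErrN, rpow_iInf' _ hp]
    refine iInf_congr fun S => ?_
    rw [rpow_iInf' _ hp]
    exact iInf_congr fun h => rpow_iInf' _ hp
  classical
  rw [unfold, unfold, unfold]
  simp only [ENNReal.iInf_add, ENNReal.add_iInf, le_iInf_iff]
  intro S₂ h₂ hc₂ S₁ h₁ hc₁
  have hcard : (S₁ ∪ S₂).card ≤ N :=
    le_trans (Finset.card_union_le _ _) (le_trans (add_le_add hc₁ hc₂) hN)
  have hne : (S₁ ∪ S₂).Nonempty := ⟨h₁.choose, Finset.mem_union_left _ h₁.choose_spec⟩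
  refine le_trans (iInf_le_of_le (S₁ ∪ S₂) (iInf_le_of_le hne (iInf_le_of_le hcard le_rfl))) ?_
  rw [quantErr_pow _ hp.ne', quantErr_pow _ hp.ne', quantErr_pow _ hp.ne',
    lintegral_add_measure]
  have hmono : ∀ (S : Finset X), S.Nonempty → S ⊆ S₁ ∪ S₂ → ∀ x : X,
      ENNReal.ofReal (infDist x (↑(S₁ ∪ S₂) : Set X) ^ p)
        ≤ ENNReal.ofReal (infDist x (↑S : Set X) ^ p) := by
    intro S hS hsub x
    refine ENNReal.ofReal_le_ofReal (Real.rpow_le_rpow infDist_nonneg ?_ hp.le)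
    exact infDist_le_infDist_of_subset (by exact_mod_cast hsub)
      (by exact_mod_cast hS)
  exact add_le_add
    (lintegral_mono (hmono S₁ h₁ Finset.subset_union_left))
    (lintegral_mono (hmono S₂ h₂ Finset.subset_union_right))

/-- subadditivity of upper quantization coefficients with fixed proportions. -/
theorem stmt_8 {X : Type*} [MetricSpace X] [CompleteSpace X]
    [TopologicalSpace.SeparableSpace X] [MeasurableSpace X] [BorelSpace X]
    (μ₁ μ₂ : Measure X) [IsFiniteMeasure μ₁] [IsFiniteMeasure μ₂]
    (p s : ℝ) (hp : 1 ≤ p) (hs : 0 < s)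
    (hmom₁ : ∃ x₀ : X, ∫⁻ x, ENNReal.ofReal (dist x x₀ ^ p) ∂μ₁ < ⊤)
    (hmom₂ : ∃ x₀ : X, ∫⁻ x, ENNReal.ofReal (dist x x₀ ^ p) ∂μ₂ < ⊤)
    (t₁ t₂ : ℝ) (ht₁ : t₁ ∈ Set.Ioo (0:ℝ) 1) (ht₂ : t₂ ∈ Set.Ioo (0:ℝ) 1)
    (ht : t₁ + t₂ = 1) :
    upperQuantCoeff (μ₁ + μ₂) p s ^ p ≤
      ENNReal.ofReal t₁ ^ (-(p / s)) * upperQuantCoeff μ₁ p s ^ p +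
        ENNReal.ofReal t₂ ^ (-(p / s)) * upperQuantCoeff μ₂ p s ^ p := by
  obtain ⟨ht₁0, ht₁1⟩ := ht₁
  obtain ⟨ht₂0, ht₂1⟩ := ht₂
  have hp0 : (0:ℝ) < p := lt_of_lt_of_le one_pos hp
  have hs1 : (0:ℝ) < 1 / s := one_div_pos.mpr hs
  have hcne : ∀ t : ℝ, 0 < t → ENNReal.ofReal t ^ (-(p / s)) ≠ 0 := by
    intro t h0
    rw [ENNReal.rpow_neg, Ne, ENNReal.inv_eq_zero]
    exact ENNReal.rpow_ne_top_of_nonneg (div_pos hp0 hs).le ENNReal.ofReal_ne_top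
  by_cases hA : upperQuantCoeff μ₁ p s = ⊤
  · rw [hA, ENNReal.top_rpow_of_pos hp0, ENNReal.mul_top (hcne t₁ ht₁0)]
    simp
  by_cases hB : upperQuantCoeff μ₂ p s = ⊤
  · rw [hB, ENNReal.top_rpow_of_pos hp0, ENNReal.mul_top (hcne t₂ ht₂0)]
    simp
  set A' : ℝ := (upperQuantCoeff μ₁ p s).toReal
  set B' : ℝ := (upperQuantCoeff μ₂ p s).toReal
  have hA'0 : 0 ≤ A' := ENNReal.toReal_nonneg
  have hB'0 : 0 ≤ B' := ENNReal.toReal_nonneg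
  have hA'eq : ENNReal.ofReal A' = upperQuantCoeff μ₁ p s := ENNReal.ofReal_toReal hA
  have hB'eq : ENNReal.ofReal B' = upperQuantCoeff μ₂ p s := ENNReal.ofReal_toReal hB
  set F : ℝ → ℝ := fun ε =>
    ((t₁ - ε)⁻¹ ^ (1 / s) * (A' + ε)) ^ p + (t₂⁻¹ ^ (1 / s) * (B' + ε)) ^ p with hFdef
  -- main estimate
  have hmain : ∀ ε : ℝ, 0 < ε → ε < t₁ →
      upperQuantCoeff (μ₁ + μ₂) p s ^ p ≤ ENNReal.ofReal (F ε) := by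
    intro ε hε0 hεt
    have htε : 0 < t₁ - ε := sub_pos.mpr hεt
    have hεE : (ENNReal.ofReal ε) ≠ 0 := (ENNReal.ofReal_pos.mpr hε0).ne'
    have hev₁ := Filter.eventually_lt_of_limsup_lt
      (show Filter.limsup (fun N : ℕ => (N : ℝ≥0∞) ^ (1 / s) * quantErrN μ₁ p N)
          Filter.atTop < upperQuantCoeff μ₁ p s + ENNReal.ofReal ε from
        ENNReal.lt_add_right hA hεE)
    have hev₂ := Filter.eventually_lt_of_limsup_lt
      (show Filter.limsup (fun N : ℕ => (N : ℝ≥0∞) ^ (1 / s) * quantErrN μ₂ p N)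
          Filter.atTop < upperQuantCoeff μ₂ p s + ENNReal.ofReal ε from
        ENNReal.lt_add_right hB hεE)
    set n₁ : ℕ → ℕ := fun N => ⌊t₁ * (N : ℝ)⌋₊ with hn₁def
    set n₂ : ℕ → ℕ := fun N => N - n₁ N with hn₂def
    have hn₁leN : ∀ N : ℕ, n₁ N ≤ N := by
      intro N
      have h : t₁ * (N : ℝ) ≤ (N : ℝ) :=
        mul_le_of_le_one_left (Nat.cast_nonneg N) ht₁1.le
      calc n₁ N ≤ ⌊(N : ℝ)⌋₊ := Nat.floor_le_floor h
        _ = N := Nat.floor_natCast N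
    have hn₂real : ∀ N : ℕ, t₂ * (N : ℝ) ≤ (n₂ N : ℝ) := by
      intro N
      have h1 : (n₁ N : ℝ) ≤ t₁ * N := Nat.floor_le (mul_nonneg ht₁0.le (Nat.cast_nonneg N))
      have h2 : (n₂ N : ℝ) = (N : ℝ) - (n₁ N : ℝ) := by
        simp only [hn₂def]
        exact_mod_cast Nat.cast_sub (hn₁leN N)
      rw [h2]; nlinarith [Nat.cast_nonneg (α := ℝ) N]
    have htend₁ : Tendsto n₁ atTop atTop :=
      tendsto_nat_floor_atTop.comp
        ((tendsto_const_mul_atTop_of_pos ht₁0).mpr tendsto_natCast_atTop_atTop)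
    have htend₂ : Tendsto n₂ atTop atTop := by
      rw [← tendsto_natCast_atTop_iff (R := ℝ)]
      exact tendsto_atTop_mono hn₂real
        ((tendsto_const_mul_atTop_of_pos ht₂0).mpr tendsto_natCast_atTop_atTop)
    have hev : ∀ᶠ N : ℕ in atTop,
        (N : ℝ≥0∞) ^ (1 / s) * quantErrN (μ₁ + μ₂) p N ≤ ENNReal.ofReal (F ε) ^ (1 / p) := by
      filter_upwards [htend₁.eventually hev₁, htend₂.eventually hev₂,
        ((tendsto_const_mul_atTop_of_pos hε0).mpr
          (tendsto_natCast_atTop_atTop (R := ℝ))).eventually_ge_atTop 1] with N hb₁ hb₂ hεN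
      have hfloor₁ : (t₁ - ε) * (N : ℝ) ≤ (n₁ N : ℝ) := by
        have h0 := Nat.sub_one_lt_floor (t₁ * (N : ℝ))
        have h1 : t₁ * (N : ℝ) - 1 ≤ (n₁ N : ℝ) := by
          simp only [hn₁def]; exact h0.le
        nlinarith
      have hfloor₂ : t₂ * (N : ℝ) ≤ (n₂ N : ℝ) := hn₂real N
      have hcast : ∀ (c : ℝ), 0 < c → ∀ (m : ℕ), c * (N : ℝ) ≤ (m : ℝ) →
          (N : ℝ≥0∞) ≤ ENNReal.ofReal c⁻¹ * (m : ℝ≥0∞) := by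
        intro c hc m hcm
        have hN : (N : ℝ) ≤ c⁻¹ * (m : ℝ) := by
          have h := mul_le_mul_of_nonneg_left hcm (inv_nonneg.mpr hc.le)
          rwa [← mul_assoc, inv_mul_cancel₀ hc.ne', one_mul] at h
        calc (N : ℝ≥0∞) = ENNReal.ofReal (N : ℝ) := (ENNReal.ofReal_natCast N).symm
          _ ≤ ENNReal.ofReal (c⁻¹ * (m : ℝ)) := ENNReal.ofReal_le_ofReal hN
          _ = ENNReal.ofReal c⁻¹ * (m : ℝ≥0∞) := by
              rw [ENNReal.ofReal_mul (inv_nonneg.mpr hc.le), ENNReal.ofReal_natCast]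
      have hx₁ : (N : ℝ≥0∞) ^ (1 / s) ≤
          ENNReal.ofReal (t₁ - ε)⁻¹ ^ (1 / s) * (n₁ N : ℝ≥0∞) ^ (1 / s) := by
        rw [← ENNReal.mul_rpow_of_nonneg _ _ hs1.le]
        exact ENNReal.rpow_le_rpow (hcast _ htε _ hfloor₁) hs1.le
      have hx₂ : (N : ℝ≥0∞) ^ (1 / s) ≤
          ENNReal.ofReal t₂⁻¹ ^ (1 / s) * (n₂ N : ℝ≥0∞) ^ (1 / s) := by
        rw [← ENNReal.mul_rpow_of_nonneg _ _ hs1.le]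
        exact ENNReal.rpow_le_rpow (hcast _ ht₂0 _ hfloor₂) hs1.le
      have hu₁ : (N : ℝ≥0∞) ^ (1 / s) * quantErrN μ₁ p (n₁ N) ≤
          ENNReal.ofReal ((t₁ - ε)⁻¹ ^ (1 / s) * (A' + ε)) := by
        have e1 : ENNReal.ofReal ((t₁ - ε)⁻¹ ^ (1 / s) * (A' + ε)) =
            ENNReal.ofReal (t₁ - ε)⁻¹ ^ (1 / s) *
              (upperQuantCoeff μ₁ p s + ENNReal.ofReal ε) := by
          rw [ENNReal.ofReal_mul (Real.rpow_nonneg (inv_nonneg.mpr htε.le) _),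
            ← ENNReal.ofReal_rpow_of_pos (inv_pos.mpr htε),
            ENNReal.ofReal_add hA'0 hε0.le, hA'eq]
        rw [e1]
        calc (N : ℝ≥0∞) ^ (1 / s) * quantErrN μ₁ p (n₁ N)
            ≤ (ENNReal.ofReal (t₁ - ε)⁻¹ ^ (1 / s) * (n₁ N : ℝ≥0∞) ^ (1 / s)) *
              quantErrN μ₁ p (n₁ N) := mul_le_mul_left hx₁ _
          _ = ENNReal.ofReal (t₁ - ε)⁻¹ ^ (1 / s) *
              ((n₁ N : ℝ≥0∞) ^ (1 / s) * quantErrN μ₁ p (n₁ N)) := by ring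
          _ ≤ _ := mul_le_mul_right hb₁.le _
      have hu₂ : (N : ℝ≥0∞) ^ (1 / s) * quantErrN μ₂ p (n₂ N) ≤
          ENNReal.ofReal (t₂⁻¹ ^ (1 / s) * (B' + ε)) := by
        have e1 : ENNReal.ofReal (t₂⁻¹ ^ (1 / s) * (B' + ε)) =
            ENNReal.ofReal t₂⁻¹ ^ (1 / s) *
              (upperQuantCoeff μ₂ p s + ENNReal.ofReal ε) := by
          rw [ENNReal.ofReal_mul (Real.rpow_nonneg (inv_nonneg.mpr ht₂0.le) _),
            ← ENNReal.ofReal_rpow_of_pos (inv_pos.mpr ht₂0),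
            ENNReal.ofReal_add hB'0 hε0.le, hB'eq]
        rw [e1]
        calc (N : ℝ≥0∞) ^ (1 / s) * quantErrN μ₂ p (n₂ N)
            ≤ (ENNReal.ofReal t₂⁻¹ ^ (1 / s) * (n₂ N : ℝ≥0∞) ^ (1 / s)) *
              quantErrN μ₂ p (n₂ N) := mul_le_mul_left hx₂ _
          _ = ENNReal.ofReal t₂⁻¹ ^ (1 / s) *
              ((n₂ N : ℝ≥0∞) ^ (1 / s) * quantErrN μ₂ p (n₂ N)) := by ring
          _ ≤ _ := mul_le_mul_right hb₂.le _
      have hpow : ((N : ℝ≥0∞) ^ (1 / s) * quantErrN (μ₁ + μ₂) p N) ^ p ≤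
          ENNReal.ofReal (F ε) := by
        have hsum : n₁ N + n₂ N ≤ N := by
          have h := hn₁leN N; simp only [hn₂def]; omega
        have hkey := key_split μ₁ μ₂ hp0 hsum
        have h1 : (0:ℝ) < (t₁ - ε)⁻¹ ^ (1 / s) * (A' + ε) :=
          mul_pos (Real.rpow_pos_of_pos (inv_pos.mpr htε) _)
            (add_pos_of_nonneg_of_pos hA'0 hε0)
        have h2 : (0:ℝ) < t₂⁻¹ ^ (1 / s) * (B' + ε) :=
          mul_pos (Real.rpow_pos_of_pos (inv_pos.mpr ht₂0) _)
            (add_pos_of_nonneg_of_pos hB'0 hε0)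
        have hF : ENNReal.ofReal (F ε) =
            ENNReal.ofReal ((t₁ - ε)⁻¹ ^ (1 / s) * (A' + ε)) ^ p +
              ENNReal.ofReal (t₂⁻¹ ^ (1 / s) * (B' + ε)) ^ p := by
          simp only [hFdef]
          rw [ENNReal.ofReal_add (Real.rpow_nonneg h1.le _) (Real.rpow_nonneg h2.le _),
            ENNReal.ofReal_rpow_of_pos h1, ENNReal.ofReal_rpow_of_pos h2]
        rw [hF]
        calc ((N : ℝ≥0∞) ^ (1 / s) * quantErrN (μ₁ + μ₂) p N) ^ p
            = ((N : ℝ≥0∞) ^ (1 / s)) ^ p * quantErrN (μ₁ + μ₂) p N ^ p :=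
              ENNReal.mul_rpow_of_nonneg _ _ hp0.le
          _ ≤ ((N : ℝ≥0∞) ^ (1 / s)) ^ p *
              (quantErrN μ₁ p (n₁ N) ^ p + quantErrN μ₂ p (n₂ N) ^ p) :=
              mul_le_mul_right hkey _
          _ = ((N : ℝ≥0∞) ^ (1 / s) * quantErrN μ₁ p (n₁ N)) ^ p +
              ((N : ℝ≥0∞) ^ (1 / s) * quantErrN μ₂ p (n₂ N)) ^ p := by
              rw [mul_add, ENNReal.mul_rpow_of_nonneg _ _ hp0.le,
                ENNReal.mul_rpow_of_nonneg _ _ hp0.le]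
          _ ≤ _ := add_le_add (ENNReal.rpow_le_rpow hu₁ hp0.le)
              (ENNReal.rpow_le_rpow hu₂ hp0.le)
      calc (N : ℝ≥0∞) ^ (1 / s) * quantErrN (μ₁ + μ₂) p N
          = (((N : ℝ≥0∞) ^ (1 / s) * quantErrN (μ₁ + μ₂) p N) ^ p) ^ (1 / p) := by
            rw [← ENNReal.rpow_mul, mul_one_div, div_self hp0.ne', ENNReal.rpow_one]
        _ ≤ ENNReal.ofReal (F ε) ^ (1 / p) :=
            ENNReal.rpow_le_rpow hpow (one_div_pos.mpr hp0).le
    have hlimsup : upperQuantCoeff (μ₁ + μ₂) p s ≤ ENNReal.ofReal (F ε) ^ (1 / p) :=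
      Filter.limsup_le_of_le (by isBoundedDefault) hev
    calc upperQuantCoeff (μ₁ + μ₂) p s ^ p
        ≤ (ENNReal.ofReal (F ε) ^ (1 / p)) ^ p := ENNReal.rpow_le_rpow hlimsup hp0.le
      _ = ENNReal.ofReal (F ε) := by
          rw [← ENNReal.rpow_mul, one_div, inv_mul_cancel₀ hp0.ne', ENNReal.rpow_one]
  -- pass to the limit ε → 0⁺
  have hcont : ContinuousAt F 0 := by
    have h₁ : ContinuousAt (fun ε : ℝ => (t₁ - ε)⁻¹ ^ (1 / s) * (A' + ε)) 0 := by
      refine ContinuousAt.mul (ContinuousAt.rpow_const ?_ ?_) ?_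
      · exact ((continuous_const.sub continuous_id).continuousAt).inv₀ (by simpa using ht₁0.ne')
      · exact Or.inr hs1.le
      · exact (continuous_const.add continuous_id).continuousAt
    have h₂ : ContinuousAt (fun ε : ℝ => t₂⁻¹ ^ (1 / s) * (B' + ε)) 0 :=
      ContinuousAt.mul continuousAt_const ((continuous_const.add continuous_id).continuousAt)
    exact ((h₁.rpow_const (Or.inr hp0.le)).add (h₂.rpow_const (Or.inr hp0.le)))
  have hlim : Tendsto (fun ε => ENNReal.ofReal (F ε)) (𝓝[>] (0:ℝ))
      (𝓝 (ENNReal.ofReal (F 0))) :=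
    (ENNReal.continuous_ofReal.continuousAt.comp hcont).continuousWithinAt.tendsto
  have hterm : ∀ (t : ℝ), 0 < t → ∀ (Q : ℝ≥0∞), Q ≠ ⊤ →
      ENNReal.ofReal ((t⁻¹ ^ (1 / s) * Q.toReal) ^ p) =
        ENNReal.ofReal t ^ (-(p / s)) * Q ^ p := by
    intro t h0 Q hQ
    rw [Real.mul_rpow (Real.rpow_nonneg (inv_nonneg.mpr h0.le) _) ENNReal.toReal_nonneg,
      ENNReal.ofReal_mul (Real.rpow_nonneg (Real.rpow_nonneg (inv_nonneg.mpr h0.le) _) _)]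
    congr 1
    · have h1 : ((t⁻¹ ^ (1 / s)) ^ p : ℝ) = t ^ (-(p / s)) := by
        rw [← Real.rpow_mul (inv_nonneg.mpr h0.le), one_div, inv_mul_eq_div,
          Real.inv_rpow h0.le, ← Real.rpow_neg h0.le]
      rw [h1, ← ENNReal.ofReal_rpow_of_pos h0]
    · rw [← ENNReal.ofReal_rpow_of_nonneg ENNReal.toReal_nonneg hp0.le,
        ENNReal.ofReal_toReal hQ]
  have hF0 : ENNReal.ofReal (F 0) =
      ENNReal.ofReal t₁ ^ (-(p / s)) * upperQuantCoeff μ₁ p s ^ p +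
        ENNReal.ofReal t₂ ^ (-(p / s)) * upperQuantCoeff μ₂ p s ^ p := by
    have hF0' : F 0 = (t₁⁻¹ ^ (1 / s) * A') ^ p + (t₂⁻¹ ^ (1 / s) * B') ^ p := by
      simp [hFdef]
    rw [hF0', ENNReal.ofReal_add
        (Real.rpow_nonneg (mul_nonneg (Real.rpow_nonneg (inv_nonneg.mpr ht₁0.le) _) hA'0) _)
        (Real.rpow_nonneg (mul_nonneg (Real.rpow_nonneg (inv_nonneg.mpr ht₂0.le) _) hB'0) _),
      hterm t₁ ht₁0 _ hA, hterm t₂ ht₂0 _ hB]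
  rw [← hF0]
  refine ge_of_tendsto hlim ?_
  filter_upwards [Ioo_mem_nhdsGT_of_mem (Set.left_mem_Ico.mpr ht₁0)] with ε hε
  exact hmain ε hε.1 hε.2
end

section
/- Let p ∈ [1,∞), s > 0, set p' = sp/(s+p). For finite Borel measures μ₁, μ₂ with finite p-th moments on a Polish space X and μ = μ₁ + μ₂, the upper quantization coefficient satisfies Q̄_{p,s}(μ)^{p'} ≤ Q̄_{p,s}(μ₁)^{p'} + Q̄_{p,s}(μ₂)^{p'}, where Q̄_{p,s}(ν) = limsup_{N→∞} N^{1/s} inf_{#S≤N} (∫ d(x,S)^p dν)^{1/p}. -/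
open MeasureTheory Filter Metric Set
open scoped ENNReal NNReal Topology

/-!
Give ⌊tN⌋ of N points to μ₁ and the rest to μ₂. The union of the two codebooks serves μ₁ + μ₂,
so the optimal N-point errors satisfy e_N(μ₁ + μ₂)^p ≤ e_{⌊tN⌋}(μ₁)^p + e_{N - ⌊tN⌋}(μ₂)^p, and
rescaling by N^{p/s} gives Q̄(μ₁ + μ₂)^p ≤ t^{-p/s} Q̄(μ₁)^p + (1 - t)^{-p/s} Q̄(μ₂)^p for every
t ∈ (0, 1). Since p = p' (1 + r) with r = p/s, putting A = Q̄(μ₁)^{p'} and B = Q̄(μ₂)^{p'} turns the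
right-hand side into t^{-r} A^{1+r} + (1 - t)^{-r} B^{1+r}, which equals (A + B)^{1+r} at
t = A / (A + B); vanishing A or B is handled by perturbing both by δ > 0 and letting δ → 0.
-/
lemma ENNReal.iInf_rpow {ι : Sort*} {f : ι → ℝ≥0∞} {c : ℝ} (hc : 0 < c) :
    (⨅ i, f i) ^ c = ⨅ i, f i ^ c :=
  (ENNReal.orderIsoRpow c hc).map_iInf f

lemma ENNReal.limsup_add_le' {ι : Type*} {l : Filter ι} (u v : ι → ℝ≥0∞) :
    limsup (u + v) l ≤ limsup u l + limsup v l := by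
  refine ENNReal.le_of_forall_pos_le_add fun ε hε hlt ↦ ?_
  have hε₂ : ((ε / 2 : ℝ≥0) : ℝ≥0∞) ≠ 0 := by simpa using hε.ne'
  have hu := eventually_lt_of_limsup_lt
    (ENNReal.lt_add_right (ne_top_of_le_ne_top hlt.ne le_self_add) hε₂)
  have hv := eventually_lt_of_limsup_lt
    (ENNReal.lt_add_right (ne_top_of_le_ne_top hlt.ne le_add_self) hε₂)
  refine limsup_le_of_le (by isBoundedDefault) ?_
  filter_upwards [hu, hv] with x hux hvx
  calc u x + v x ≤ (limsup u l + (ε / 2 : ℝ≥0)) + (limsup v l + (ε / 2 : ℝ≥0)) :=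
        add_le_add hux.le hvx.le
    _ = limsup u l + limsup v l + ε := by
        rw [add_add_add_comm, ← ENNReal.coe_add, add_halves]

section SplitSequences

variable {φ : ℕ → ℕ} {t : ℝ}

lemma tendsto_atTop_of_tendsto_div_natCast (ht : 0 < t)
    (hφ : Tendsto (fun N : ℕ ↦ (φ N : ℝ) / N) atTop (𝓝 t)) : Tendsto φ atTop atTop := by
  rw [← tendsto_natCast_atTop_iff (R := ℝ)]
  refine (hφ.pos_mul_atTop ht tendsto_natCast_atTop_atTop).congr' ?_
  filter_upwards [eventually_ne_atTop 0] with N hN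
  field_simp

lemma tendsto_div_rpow_of_tendsto_div_natCast (ht : 0 < t)
    (hφ : Tendsto (fun N : ℕ ↦ (φ N : ℝ) / N) atTop (𝓝 t)) (r : ℝ) :
    Tendsto (fun N : ℕ ↦ ((N : ℝ≥0∞) / φ N) ^ r) atTop (𝓝 (ENNReal.ofReal (t ^ (-r)))) := by
  have hreal : Tendsto (fun N : ℕ ↦ ((N : ℝ) / φ N) ^ r) atTop (𝓝 (t ^ (-r))) := by
    rw [Real.rpow_neg ht.le, ← Real.inv_rpow ht.le]
    exact ((hφ.inv₀ ht.ne').congr fun N ↦ inv_div _ _).rpow_const (.inl (inv_ne_zero ht.ne'))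
  refine (ENNReal.tendsto_ofReal hreal).congr' ?_
  filter_upwards [eventually_ne_atTop 0,
    (tendsto_atTop_of_tendsto_div_natCast ht hφ).eventually_ne_atTop 0] with N hN hφN
  rw [← ENNReal.ofReal_rpow_of_pos (by positivity), ENNReal.ofReal_div_of_pos (by positivity),
    ENNReal.ofReal_natCast, ENNReal.ofReal_natCast]

lemma limsup_rpow_mul_comp_le {r : ℝ} (hr : 0 ≤ r) (ht : 0 < t)
    (hφ : Tendsto (fun N : ℕ ↦ (φ N : ℝ) / N) atTop (𝓝 t)) (f : ℕ → ℝ≥0∞) :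
    limsup (fun N : ℕ ↦ (N : ℝ≥0∞) ^ r * f (φ N)) atTop
      ≤ ENNReal.ofReal (t ^ (-r)) * limsup (fun N : ℕ ↦ (N : ℝ≥0∞) ^ r * f N) atTop := by
  have hφ_atTop := tendsto_atTop_of_tendsto_div_natCast ht hφ
  have hlim := (tendsto_div_rpow_of_tendsto_div_natCast ht hφ r).limsup_eq
  have hpos : ENNReal.ofReal (t ^ (-r)) ≠ 0 := by positivity
  calc limsup (fun N : ℕ ↦ (N : ℝ≥0∞) ^ r * f (φ N)) atTop
      = limsup (fun N : ℕ ↦ ((N : ℝ≥0∞) / φ N) ^ r * ((φ N : ℝ≥0∞) ^ r * f (φ N))) atTop := by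
        refine limsup_congr ?_
        filter_upwards [hφ_atTop.eventually_ne_atTop 0] with N hN
        rw [← mul_assoc, ← ENNReal.mul_rpow_of_nonneg _ _ hr,
          ENNReal.div_mul_cancel (by exact_mod_cast hN) (ENNReal.natCast_ne_top _)]
    _ ≤ limsup (fun N : ℕ ↦ ((N : ℝ≥0∞) / φ N) ^ r) atTop
          * limsup (fun N : ℕ ↦ (φ N : ℝ≥0∞) ^ r * f (φ N)) atTop :=
        ENNReal.limsup_mul_le' (.inl (hlim ▸ hpos)) (.inl (hlim ▸ ENNReal.ofReal_ne_top))
    _ ≤ ENNReal.ofReal (t ^ (-r)) * limsup (fun N : ℕ ↦ (N : ℝ≥0∞) ^ r * f N) atTop := by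
        rw [hlim]
        gcongr
        exact hφ_atTop.limsup_comp_le_limsup (u := fun N : ℕ ↦ (N : ℝ≥0∞) ^ r * f N)

lemma limsup_rpow_mul_le_of_le_add {r : ℝ} (hr : 0 ≤ r) {φ₁ φ₂ : ℕ → ℕ} {t₁ t₂ : ℝ}
    (ht₁ : 0 < t₁) (ht₂ : 0 < t₂)
    (hφ₁ : Tendsto (fun N : ℕ ↦ (φ₁ N : ℝ) / N) atTop (𝓝 t₁))
    (hφ₂ : Tendsto (fun N : ℕ ↦ (φ₂ N : ℝ) / N) atTop (𝓝 t₂))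
    {f g h : ℕ → ℝ≥0∞} (hsplit : ∀ N, h N ≤ f (φ₁ N) + g (φ₂ N)) :
    limsup (fun N : ℕ ↦ (N : ℝ≥0∞) ^ r * h N) atTop
      ≤ ENNReal.ofReal (t₁ ^ (-r)) * limsup (fun N : ℕ ↦ (N : ℝ≥0∞) ^ r * f N) atTop
        + ENNReal.ofReal (t₂ ^ (-r)) * limsup (fun N : ℕ ↦ (N : ℝ≥0∞) ^ r * g N) atTop :=
  calc limsup (fun N : ℕ ↦ (N : ℝ≥0∞) ^ r * h N) atTop
      ≤ limsup ((fun N : ℕ ↦ (N : ℝ≥0∞) ^ r * f (φ₁ N))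
          + fun N : ℕ ↦ (N : ℝ≥0∞) ^ r * g (φ₂ N)) atTop :=
        limsup_le_limsup (.of_forall fun N ↦ (mul_le_mul' le_rfl (hsplit N)).trans_eq (mul_add ..))
    _ ≤ _ := (ENNReal.limsup_add_le' _ _).trans <|
        add_le_add (limsup_rpow_mul_comp_le hr ht₁ hφ₁ f) (limsup_rpow_mul_comp_le hr ht₂ hφ₂ g)

lemma floor_mul_natCast_le_self (ht : t ≤ 1) (N : ℕ) : ⌊t * N⌋₊ ≤ N :=
  Nat.floor_le_of_le (mul_le_of_le_one_left N.cast_nonneg ht)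

lemma tendsto_floor_mul_div_natCast (ht : 0 ≤ t) :
    Tendsto (fun N : ℕ ↦ (⌊t * N⌋₊ : ℝ) / N) atTop (𝓝 t) :=
  (tendsto_nat_floor_mul_div_atTop ht).comp tendsto_natCast_atTop_atTop

lemma tendsto_sub_floor_mul_div_natCast (ht₀ : 0 ≤ t) (ht₁ : t ≤ 1) :
    Tendsto (fun N : ℕ ↦ ((N - ⌊t * N⌋₊ : ℕ) : ℝ) / N) atTop (𝓝 (1 - t)) := by
  refine (tendsto_const_nhds.sub (tendsto_floor_mul_div_natCast ht₀)).congr' ?_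
  filter_upwards [eventually_ne_atTop 0] with N hN
  rw [Nat.cast_sub (floor_mul_natCast_le_self ht₁ N), sub_div, div_self (by exact_mod_cast hN)]

end SplitSequences

lemma rpow_allocation {A B : ℝ} (hA : 0 < A) (hB : 0 < B) (r : ℝ) :
    (A / (A + B)) ^ (-r) * A ^ (1 + r) + (B / (A + B)) ^ (-r) * B ^ (1 + r)
      = (A + B) ^ (1 + r) := by
  have hAB : 0 < A + B := add_pos hA hB
  have key : ∀ {C : ℝ}, 0 < C → (C / (A + B)) ^ (-r) * C ^ (1 + r) = (A + B) ^ r * C := by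
    intro C hC
    rw [Real.div_rpow hC.le hAB.le, Real.rpow_add hC, Real.rpow_neg hC.le, Real.rpow_neg hAB.le,
      Real.rpow_one]
    field_simp
  rw [key hA, key hB, ← mul_add, Real.rpow_add hAB, Real.rpow_one, mul_comm]

lemma le_ofReal_add_rpow_of_forall_allocation {L : ℝ≥0∞} {A B r : ℝ} (hA : 0 ≤ A) (hB : 0 ≤ B)
    (hr : 0 ≤ r) (h : ∀ t : ℝ, 0 < t → t < 1 →
      L ≤ ENNReal.ofReal (t ^ (-r) * A ^ (1 + r) + (1 - t) ^ (-r) * B ^ (1 + r))) :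
    L ≤ ENNReal.ofReal ((A + B) ^ (1 + r)) := by
  have hcont : Continuous fun δ : ℝ ↦ ENNReal.ofReal ((A + δ + (B + δ)) ^ (1 + r)) :=
    ENNReal.continuous_ofReal.comp ((Real.continuous_rpow_const (by linarith)).comp (by fun_prop))
  have hlim : Tendsto (fun δ : ℝ ↦ ENNReal.ofReal ((A + δ + (B + δ)) ^ (1 + r))) (𝓝[>] 0)
      (𝓝 (ENNReal.ofReal ((A + B) ^ (1 + r)))) := by
    simpa using (hcont.tendsto 0).mono_left nhdsWithin_le_nhds
  refine ge_of_tendsto hlim (eventually_nhdsWithin_of_forall fun δ (hδ : 0 < δ) ↦ ?_)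
  have ha : 0 < A + δ := by linarith
  have hb : 0 < B + δ := by linarith
  have hcompl : 1 - (A + δ) / (A + δ + (B + δ)) = (B + δ) / (A + δ + (B + δ)) := by
    field_simp
    ring
  have hL := h ((A + δ) / (A + δ + (B + δ))) (by positivity)
    ((div_lt_one (by positivity)).2 (by linarith))
  rw [hcompl] at hL
  refine hL.trans ?_
  rw [← rpow_allocation ha hb r]
  gcongr <;> linarith

lemma ENNReal.le_add_rpow_of_forall_allocation {L A B : ℝ≥0∞} {r : ℝ} (hr : 0 ≤ r)
    (h : ∀ t : ℝ, 0 < t → t < 1 →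
      L ≤ ENNReal.ofReal (t ^ (-r)) * A ^ (1 + r) + ENNReal.ofReal ((1 - t) ^ (-r)) * B ^ (1 + r)) :
    L ≤ (A + B) ^ (1 + r) := by
  have hr₁ : 0 < 1 + r := by linarith
  rcases eq_or_ne A ∞ with rfl | hA
  · simp [ENNReal.top_rpow_of_pos hr₁]
  rcases eq_or_ne B ∞ with rfl | hB
  · simp [ENNReal.top_rpow_of_pos hr₁]
  rw [← ENNReal.ofReal_toReal hA, ← ENNReal.ofReal_toReal hB] at h ⊢
  rw [← ENNReal.ofReal_add ENNReal.toReal_nonneg ENNReal.toReal_nonneg,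
    ENNReal.ofReal_rpow_of_nonneg (by positivity) hr₁.le]
  refine le_ofReal_add_rpow_of_forall_allocation ENNReal.toReal_nonneg ENNReal.toReal_nonneg hr
    fun t ht₀ ht₁ ↦ (h t ht₀ ht₁).trans_eq ?_
  rw [ENNReal.ofReal_rpow_of_nonneg ENNReal.toReal_nonneg hr₁.le,
    ENNReal.ofReal_rpow_of_nonneg ENNReal.toReal_nonneg hr₁.le,
    ← ENNReal.ofReal_mul (by positivity), ← ENNReal.ofReal_mul (by positivity),
    ← ENNReal.ofReal_add (by positivity) (by positivity)]

section Quantization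

variable {X : Type*} [MetricSpace X] [MeasurableSpace X]

lemma quantErr_rpow (μ : Measure X) {p : ℝ} (hp : p ≠ 0) (S : Set X) :
    quantErr μ p S ^ p = ∫⁻ x, ENNReal.ofReal (infDist x S ^ p) ∂μ := by
  rw [quantErr, ← ENNReal.rpow_mul, one_div_mul_cancel hp, ENNReal.rpow_one]

lemma quantErr_add_union_rpow_le (μ₁ μ₂ : Measure X) {p : ℝ} (hp : 0 < p) {S₁ S₂ : Set X}
    (h₁ : S₁.Nonempty) (h₂ : S₂.Nonempty) :
    quantErr (μ₁ + μ₂) p (S₁ ∪ S₂) ^ p ≤ quantErr μ₁ p S₁ ^ p + quantErr μ₂ p S₂ ^ p := by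
  simp only [quantErr_rpow _ hp.ne', lintegral_add_measure]
  gcongr with x x
  · exact infDist_nonneg
  · exact infDist_le_infDist_of_subset subset_union_left h₁
  · exact infDist_nonneg
  · exact infDist_le_infDist_of_subset subset_union_right h₂

lemma quantErrN_add_rpow_le (μ₁ μ₂ : Measure X) {p : ℝ} (hp : 0 < p) (N₁ N₂ : ℕ) :
    quantErrN (μ₁ + μ₂) p (N₁ + N₂) ^ p ≤ quantErrN μ₁ p N₁ ^ p + quantErrN μ₂ p N₂ ^ p := by
  classical
  simp only [quantErrN, ENNReal.iInf_rpow hp]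
  refine ENNReal.le_iInf_add_iInf fun S₁ S₂ ↦ ENNReal.le_iInf_add_iInf fun h₁ h₂ ↦
    ENNReal.le_iInf_add_iInf fun hN₁ hN₂ ↦ ?_
  refine iInf_le_of_le (S₁ ∪ S₂) <| iInf_le_of_le (h₁.mono Finset.subset_union_left) <|
    iInf_le_of_le ((Finset.card_union_le _ _).trans (add_le_add hN₁ hN₂)) ?_
  rw [Finset.coe_union]
  exact quantErr_add_union_rpow_le μ₁ μ₂ hp (by simpa using h₁) (by simpa using h₂)

lemma upperQuantCoeff_rpow (μ : Measure X) {p : ℝ} (hp : 0 ≤ p) (s : ℝ) :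
    upperQuantCoeff μ p s ^ p
      = limsup (fun N : ℕ ↦ (N : ℝ≥0∞) ^ (p / s) * quantErrN μ p N ^ p) atTop := by
  rw [upperQuantCoeff, (ENNReal.monotone_rpow_of_nonneg hp).map_limsup_of_continuousAt _
    ENNReal.continuous_rpow_const.continuousAt]
  congr 1
  ext N
  simp only [Function.comp_apply]
  rw [ENNReal.mul_rpow_of_nonneg _ _ hp, ← ENNReal.rpow_mul, one_div_mul_eq_div]

lemma upperQuantCoeff_add_rpow_le (μ₁ μ₂ : Measure X) {p s t : ℝ} (hp : 0 < p) (hs : 0 < s)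
    (ht₀ : 0 < t) (ht₁ : t < 1) :
    upperQuantCoeff (μ₁ + μ₂) p s ^ p
      ≤ ENNReal.ofReal (t ^ (-(p / s))) * upperQuantCoeff μ₁ p s ^ p
        + ENNReal.ofReal ((1 - t) ^ (-(p / s))) * upperQuantCoeff μ₂ p s ^ p := by
  simp only [upperQuantCoeff_rpow _ hp.le]
  refine limsup_rpow_mul_le_of_le_add (by positivity) ht₀ (sub_pos.2 ht₁)
    (tendsto_floor_mul_div_natCast ht₀.le) (tendsto_sub_floor_mul_div_natCast ht₀.le ht₁.le)
    fun N ↦ ?_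
  have hsplit : ⌊t * N⌋₊ + (N - ⌊t * N⌋₊) = N :=
    Nat.add_sub_cancel' (floor_mul_natCast_le_self ht₁.le N)
  simpa only [hsplit] using quantErrN_add_rpow_le μ₁ μ₂ hp ⌊t * N⌋₊ (N - ⌊t * N⌋₊)

end Quantization

theorem stmt_9_general {X : Type*} [MetricSpace X] [MeasurableSpace X]
    (μ₁ μ₂ : Measure X) (p s : ℝ) (hp : 1 ≤ p) (hs : 0 < s) (p' : ℝ) (hp' : p' = s * p / (s + p)) :
    upperQuantCoeff (μ₁ + μ₂) p s ^ p' ≤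
      upperQuantCoeff μ₁ p s ^ p' + upperQuantCoeff μ₂ p s ^ p' := by
  have hp₀ : 0 < p := by linarith
  have hr : 0 ≤ p / s := by positivity
  have hexp : p' * (1 + p / s) = p := by
    rw [hp']
    field_simp
  have hpow : upperQuantCoeff (μ₁ + μ₂) p s ^ p
      ≤ (upperQuantCoeff μ₁ p s ^ p' + upperQuantCoeff μ₂ p s ^ p') ^ (1 + p / s) :=
    ENNReal.le_add_rpow_of_forall_allocation hr fun t ht₀ ht₁ ↦ by
      simpa only [← ENNReal.rpow_mul, hexp] using
        upperQuantCoeff_add_rpow_le μ₁ μ₂ hp₀ hs ht₀ ht₁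
  have hr₁ : 1 + p / s ≠ 0 := by positivity
  have hexp' : p * (1 + p / s)⁻¹ = p' := (mul_inv_eq_iff_eq_mul₀ hr₁).2 hexp.symm
  calc upperQuantCoeff (μ₁ + μ₂) p s ^ p'
      = (upperQuantCoeff (μ₁ + μ₂) p s ^ p) ^ (1 + p / s)⁻¹ := by
        rw [← ENNReal.rpow_mul, hexp']
    _ ≤ ((upperQuantCoeff μ₁ p s ^ p' + upperQuantCoeff μ₂ p s ^ p') ^ (1 + p / s))
          ^ (1 + p / s)⁻¹ := by gcongr
    _ = upperQuantCoeff μ₁ p s ^ p' + upperQuantCoeff μ₂ p s ^ p' := by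
        rw [← ENNReal.rpow_mul, mul_inv_cancel₀ hr₁, ENNReal.rpow_one]

/-- p'-subadditivity of upper quantization coefficients. -/
theorem stmt_9 {X : Type*} [MetricSpace X] [CompleteSpace X]
    [TopologicalSpace.SeparableSpace X] [MeasurableSpace X] [BorelSpace X]
    (μ₁ μ₂ : Measure X) [IsFiniteMeasure μ₁] [IsFiniteMeasure μ₂]
    (p s : ℝ) (hp : 1 ≤ p) (hs : 0 < s)
    (hmom₁ : ∃ x₀ : X, ∫⁻ x, ENNReal.ofReal (dist x x₀ ^ p) ∂μ₁ < ⊤)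
    (hmom₂ : ∃ x₀ : X, ∫⁻ x, ENNReal.ofReal (dist x x₀ ^ p) ∂μ₂ < ⊤)
    (p' : ℝ) (hp' : p' = s * p / (s + p)) :
    upperQuantCoeff (μ₁ + μ₂) p s ^ p' ≤
      upperQuantCoeff μ₁ p s ^ p' + upperQuantCoeff μ₂ p s ^ p' :=
  stmt_9_general μ₁ μ₂ p s hp hs p' hp'
end

section
/- Let (X,d) be a metric space, ν a Borel measure, A ⊆ X Borel with 0 < ν(A) < ∞, and suppose there exist ϑ, δ > 0 such that ν(A ∩ B_r(x)) ≤ ϑ r^s for all x ∈ X and 0 < r < δ. Then for p ∈ [1,∞), liminf_{N→∞} N^{1/s} e_{N,p}(ν|_A) ≥ (s/(s+p))^{1/p} · ϑ^{-1/s} · ν(A)^{(s+p)/(sp)}, where e_{N,p}(ν|_A) = inf_{#S≤N} (∫_A d(x,S)^p dν(x))^{1/p}. -/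
open MeasureTheory Filter Metric Set
open scoped ENNReal NNReal Topology

lemma quant_aux {X : Type*} [MetricSpace X] [MeasurableSpace X] [BorelSpace X]
    (ν : Measure X) (A : Set X) (hA : MeasurableSet A)
    (p s ϑ δ C : ℝ) (hp : 1 ≤ p) (hs : 0 < s) (hϑ : 0 < ϑ) (hδ : 0 < δ)
    (hC : 0 < C) (hCA : ν A = ENNReal.ofReal C)
    (hconc : ∀ x : X, ∀ r : ℝ, 0 < r → r < δ →
      ν (A ∩ ball x r) ≤ ENNReal.ofReal (ϑ * r ^ s))
    (N : ℕ) (hN : 0 < N) (hrδ : (C / (N * ϑ)) ^ (1 / s) < δ)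
    (S : Finset X) (hS : S.Nonempty) (hcard : S.card ≤ N) :
    ENNReal.ofReal ((s / (s + p)) ^ (1 / p) * ϑ ^ (-(1 / s)) * C ^ ((s + p) / (s * p))) ≤
      (N : ℝ≥0∞) ^ (1 / s) * quantErr (ν.restrict A) p (S : Set X) := by
  have hp0 : (0:ℝ) < p := lt_of_lt_of_le one_pos hp
  have hNR : (0:ℝ) < (N:ℝ) := Nat.cast_pos.mpr hN
  set D : ℝ := (N:ℝ) * ϑ with hDdef
  have hD : 0 < D := mul_pos hNR hϑ
  have hCD : 0 < C / D := div_pos hC hD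
  set r : ℝ := (C / D) ^ (1 / s) with hrdef
  have hr0 : 0 < r := Real.rpow_pos_of_pos hCD _
  have hrδ' : r < δ := hrδ
  have hrs : r ^ s = C / D := by
    rw [hrdef, ← Real.rpow_mul hCD.le, one_div_mul_cancel hs.ne', Real.rpow_one]
  have hDrs : D * r ^ s = C := by rw [hrs]; field_simp
  set f : X → ℝ := fun x => infDist x (S : Set X) with hfdef
  have hf_cont : Continuous f := continuous_infDist_pt _
  set μ : Measure X := ν.restrict A with hμdef
  -- Step A : measure tail bound
  have stepA : ∀ t : ℝ, 0 < t → t ≤ r →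
      ENNReal.ofReal (C - D * t ^ s) ≤ μ {x | t ≤ f x} := by
    intro t ht htr
    have htδ : t < δ := lt_of_le_of_lt htr hrδ'
    have hcover : A ∩ {x | f x < t} ⊆ ⋃ y ∈ S, A ∩ ball y t := by
      rintro x ⟨hxA, hxd⟩
      obtain ⟨y, hyS, hy⟩ := (infDist_lt_iff (by exact_mod_cast hS.to_set)).mp hxd
      exact mem_biUnion hyS ⟨hxA, mem_ball.mpr hy⟩
    have hlt : ν (A ∩ {x | f x < t}) ≤ ENNReal.ofReal (D * t ^ s) := by
      calc ν (A ∩ {x | f x < t}) ≤ ν (⋃ y ∈ S, A ∩ ball y t) := measure_mono hcover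
        _ ≤ ∑ y ∈ S, ν (A ∩ ball y t) := measure_biUnion_finset_le S _
        _ ≤ ∑ _y ∈ S, ENNReal.ofReal (ϑ * t ^ s) :=
            Finset.sum_le_sum fun y _ => hconc y t ht htδ
        _ = (S.card : ℝ≥0∞) * ENNReal.ofReal (ϑ * t ^ s) := by
            rw [Finset.sum_const, nsmul_eq_mul]
        _ ≤ (N : ℝ≥0∞) * ENNReal.ofReal (ϑ * t ^ s) :=
            mul_le_mul_left (by exact_mod_cast hcard) _
        _ = ENNReal.ofReal (D * t ^ s) := by
            rw [← ENNReal.ofReal_natCast N, ← ENNReal.ofReal_mul (Nat.cast_nonneg N),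
              hDdef, mul_assoc]
    have hmeas : MeasurableSet {x : X | t ≤ f x} :=
      measurableSet_le measurable_const hf_cont.measurable
    have hsplit : ν A ≤ ν ({x | t ≤ f x} ∩ A) + ν (A ∩ {x | f x < t}) := by
      refine le_trans (measure_mono ?_) (measure_union_le _ _)
      intro x hx
      rcases le_or_gt t (f x) with h | h
      · exact Or.inl ⟨h, hx⟩
      · exact Or.inr ⟨hx, h⟩
    have : ν A - ν (A ∩ {x | f x < t}) ≤ ν ({x | t ≤ f x} ∩ A) :=
      tsub_le_iff_right.mpr hsplit
    calc ENNReal.ofReal (C - D * t ^ s)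
        = ENNReal.ofReal C - ENNReal.ofReal (D * t ^ s) :=
          ENNReal.ofReal_sub _ (by positivity)
      _ ≤ ν A - ν (A ∩ {x | f x < t}) := by
          rw [hCA]; exact tsub_le_tsub le_rfl hlt
      _ ≤ ν ({x | t ≤ f x} ∩ A) := this
      _ = μ {x | t ≤ f x} := (Measure.restrict_apply hmeas).symm
  -- Step B : layer cake
  have key := lintegral_rpow_eq_lintegral_meas_le_mul μ
    (Filter.Eventually.of_forall fun x => infDist_nonneg)
    hf_cont.measurable.aemeasurable hp0
  -- Step C/D/E : lower bound the tail integral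
  set h : ℝ → ℝ := fun t => C * t ^ (p - 1) - D * t ^ (s + p - 1) with hhdef
  have h_eq : ∀ t : ℝ, 0 < t → h t = (C - D * t ^ s) * t ^ (p - 1) := by
    intro t ht
    have : t ^ (s + p - 1) = t ^ s * t ^ (p - 1) := by
      rw [← Real.rpow_add ht]; ring_nf
    rw [hhdef]; simp only []; rw [this]; ring
  have h_nonneg : ∀ t ∈ Ioc (0:ℝ) r, 0 ≤ h t := by
    intro t ht
    rw [h_eq t ht.1]
    have hts : t ^ s ≤ r ^ s := Real.rpow_le_rpow ht.1.le ht.2 hs.le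
    have : D * t ^ s ≤ C := by
      calc D * t ^ s ≤ D * r ^ s := by nlinarith
        _ = C := hDrs
    exact mul_nonneg (sub_nonneg.mpr this) (Real.rpow_nonneg ht.1.le _)
  have i1 : IntervalIntegrable (fun t : ℝ => t ^ (p - 1)) volume 0 r :=
    intervalIntegral.intervalIntegrable_rpow' (by linarith)
  have i2 : IntervalIntegrable (fun t : ℝ => t ^ (s + p - 1)) volume 0 r :=
    intervalIntegral.intervalIntegrable_rpow' (by linarith)
  have h_int : IntegrableOn h (Ioc 0 r) volume := by
    exact ((i1.1.const_mul C).sub (i2.1.const_mul D))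
  have stepC : ∫⁻ t in Ioc (0:ℝ) r, ENNReal.ofReal (h t) ≤
      ∫⁻ t in Ioi (0:ℝ), μ {x | t ≤ f x} * ENNReal.ofReal (t ^ (p - 1)) := by
    calc ∫⁻ t in Ioc (0:ℝ) r, ENNReal.ofReal (h t)
        ≤ ∫⁻ t in Ioc (0:ℝ) r, μ {x | t ≤ f x} * ENNReal.ofReal (t ^ (p - 1)) := by
          refine setLIntegral_mono' measurableSet_Ioc ?_
          intro t ht
          rw [h_eq t ht.1, ENNReal.ofReal_mul (by
            have hts : t ^ s ≤ r ^ s := Real.rpow_le_rpow ht.1.le ht.2 hs.le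
            nlinarith)]
          exact mul_le_mul_left (stepA t ht.1 ht.2) _
      _ ≤ ∫⁻ t in Ioi (0:ℝ), μ {x | t ≤ f x} * ENNReal.ofReal (t ^ (p - 1)) :=
          lintegral_mono_set Ioc_subset_Ioi_self
  have stepD : ∫⁻ t in Ioc (0:ℝ) r, ENNReal.ofReal (h t) =
      ENNReal.ofReal (∫ t in Ioc (0:ℝ) r, h t) := by
    rw [← ofReal_integral_eq_lintegral_ofReal h_int]
    filter_upwards [self_mem_ae_restrict measurableSet_Ioc] with t ht
    exact h_nonneg t ht
  have hsp : (0:ℝ) < s + p := by linarith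
  have stepE : ∫ t in Ioc (0:ℝ) r, h t = C * r ^ p * (s / (p * (s + p))) := by
    rw [← intervalIntegral.integral_of_le hr0.le]
    rw [hhdef]
    rw [intervalIntegral.integral_sub (i1.const_mul C) (i2.const_mul D),
      intervalIntegral.integral_const_mul, intervalIntegral.integral_const_mul,
      integral_rpow (Or.inl (by linarith : (-1:ℝ) < p - 1)),
      integral_rpow (Or.inl (by linarith : (-1:ℝ) < s + p - 1))]
    have e1 : p - 1 + 1 = p := by ring
    have e2 : s + p - 1 + 1 = s + p := by ring
    rw [e1, e2, Real.zero_rpow hp0.ne', Real.zero_rpow hsp.ne']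
    have hrsp : r ^ (s + p) = (C / D) * r ^ p := by
      rw [Real.rpow_add hr0, hrs]
    rw [hrsp]
    field_simp
    ring
  -- Step F : combine
  have stepF : ENNReal.ofReal (C * r ^ p * (s / (s + p))) ≤
      ∫⁻ x, ENNReal.ofReal (f x ^ p) ∂μ := by
    rw [key]
    calc ENNReal.ofReal (C * r ^ p * (s / (s + p)))
        = ENNReal.ofReal p * ENNReal.ofReal (C * r ^ p * (s / (p * (s + p)))) := by
          rw [← ENNReal.ofReal_mul hp0.le]
          congr 1
          field_simp
      _ ≤ ENNReal.ofReal p *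
          ∫⁻ t in Ioi (0:ℝ), μ {x | t ≤ f x} * ENNReal.ofReal (t ^ (p - 1)) := by
          refine mul_le_mul_right ?_ _
          rw [← stepE, ← stepD]
          exact stepC
  -- Step G : take p-th root
  have hr_pow : 0 ≤ C * r ^ p * (s / (s + p)) := by positivity
  have stepG : ENNReal.ofReal ((C * (s / (s + p))) ^ (1 / p) * r) ≤
      quantErr μ p (S : Set X) := by
    have := ENNReal.rpow_le_rpow stepF (by positivity : (0:ℝ) ≤ 1 / p)
    rw [ENNReal.ofReal_rpow_of_nonneg hr_pow (by positivity)] at this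
    refine le_trans (le_of_eq ?_) this
    congr 1
    have hrp : (r ^ p) ^ (1 / p) = r := by
      rw [← Real.rpow_mul hr0.le, mul_one_div_cancel hp0.ne', Real.rpow_one]
    have e : C * r ^ p * (s / (s + p)) = (C * (s / (s + p))) * r ^ p := by ring
    have e' : ((C * (s / (s + p))) * r ^ p) ^ (1 / p) =
        (C * (s / (s + p))) ^ (1 / p) * (r ^ p) ^ (1 / p) :=
      Real.mul_rpow (by positivity) (by positivity)
    rw [e, e', hrp]
  -- Step H : multiply by N^{1/s}
  have hNpow : ((N : ℝ≥0∞)) ^ (1 / s) = ENNReal.ofReal ((N:ℝ) ^ (1 / s)) := by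
    rw [← ENNReal.ofReal_natCast N, ENNReal.ofReal_rpow_of_nonneg (Nat.cast_nonneg N)
      (by positivity)]
  have final : ENNReal.ofReal ((N:ℝ) ^ (1 / s) * ((C * (s / (s + p))) ^ (1 / p) * r)) ≤
      (N : ℝ≥0∞) ^ (1 / s) * quantErr μ p (S : Set X) := by
    rw [ENNReal.ofReal_mul (by positivity), ← hNpow]
    exact mul_le_mul_right stepG _
  refine le_trans (le_of_eq ?_) final
  congr 1
  have hNr : (N:ℝ) ^ (1 / s) * r = (C / ϑ) ^ (1 / s) := by
    rw [hrdef, ← Real.mul_rpow (Nat.cast_nonneg N) hCD.le]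
    congr 1
    rw [hDdef]
    field_simp
  have e1 : (C * (s / (s + p))) ^ (1 / p) = C ^ (1 / p) * (s / (s + p)) ^ (1 / p) :=
    Real.mul_rpow hC.le (by positivity)
  have e2 : (C / ϑ) ^ (1 / s) = C ^ (1 / s) * ϑ ^ (-(1 / s)) := by
    rw [Real.div_rpow hC.le hϑ.le, Real.rpow_neg hϑ.le, div_eq_mul_inv]
  have e3 : C ^ ((s + p) / (s * p)) = C ^ (1 / p) * C ^ (1 / s) := by
    rw [← Real.rpow_add hC]
    congr 1
    rw [div_add_div _ _ hp0.ne' hs.ne']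
    ring_nf
  calc (s / (s + p)) ^ (1 / p) * ϑ ^ (-(1 / s)) * C ^ ((s + p) / (s * p))
      = (s / (s + p)) ^ (1 / p) * ϑ ^ (-(1 / s)) * (C ^ (1 / p) * C ^ (1 / s)) := by rw [e3]
    _ = ((N:ℝ) ^ (1 / s) * r) * (C ^ (1 / p) * (s / (s + p)) ^ (1 / p)) := by
        rw [hNr, e2]; ring
    _ = (N:ℝ) ^ (1 / s) * ((C * (s / (s + p))) ^ (1 / p) * r) := by rw [e1]; ring

/-- lower bound on quantization coefficients from a concentration
upper bound on the measure of balls. -/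
theorem stmt_10 {X : Type*} [MetricSpace X] [MeasurableSpace X] [BorelSpace X]
    (ν : Measure X) (A : Set X) (hA : MeasurableSet A)
    (hA0 : 0 < ν A) (hAfin : ν A < ⊤)
    (p s ϑ δ : ℝ) (hp : 1 ≤ p) (hs : 0 < s) (hϑ : 0 < ϑ) (hδ : 0 < δ)
    (hconc : ∀ x : X, ∀ r : ℝ, 0 < r → r < δ →
      ν (A ∩ ball x r) ≤ ENNReal.ofReal (ϑ * r ^ s)) :
    ENNReal.ofReal ((s / (s + p)) ^ (1 / p) * ϑ ^ (-(1 / s))) *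
        ν A ^ ((s + p) / (s * p)) ≤
      liminf (fun N : ℕ => (N : ℝ≥0∞) ^ (1 / s) * quantErrN (ν.restrict A) p N) atTop := by
  have hp0 : (0:ℝ) < p := lt_of_lt_of_le one_pos hp
  set C : ℝ := (ν A).toReal with hCdef
  have hC : 0 < C := ENNReal.toReal_pos hA0.ne' hAfin.ne
  have hCA : ν A = ENNReal.ofReal C := (ENNReal.ofReal_toReal hAfin.ne).symm
  set c : ℝ≥0∞ :=
    ENNReal.ofReal ((s / (s + p)) ^ (1 / p) * ϑ ^ (-(1 / s)) * C ^ ((s + p) / (s * p)))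
    with hcdef
  have hLHS : ENNReal.ofReal ((s / (s + p)) ^ (1 / p) * ϑ ^ (-(1 / s))) *
      ν A ^ ((s + p) / (s * p)) = c := by
    rw [hCA, ENNReal.ofReal_rpow_of_nonneg hC.le (by positivity), hcdef,
      ← ENNReal.ofReal_mul (by positivity)]
  rw [hLHS]
  obtain ⟨N0, hN0⟩ := exists_nat_gt (C / (ϑ * δ ^ s))
  have hev : ∀ᶠ N : ℕ in atTop,
      c ≤ (N : ℝ≥0∞) ^ (1 / s) * quantErrN (ν.restrict A) p N := by
    filter_upwards [eventually_ge_atTop (max 1 N0)] with N hNge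
    have hN1 : 1 ≤ N := le_trans (le_max_left _ _) hNge
    have hNN0 : N0 ≤ N := le_trans (le_max_right _ _) hNge
    have hNpos : 0 < N := hN1
    have hNR : (0:ℝ) < (N:ℝ) := Nat.cast_pos.mpr hNpos
    have hδs : (0:ℝ) < δ ^ s := Real.rpow_pos_of_pos hδ s
    have hNbig : C / (ϑ * δ ^ s) < (N:ℝ) :=
      lt_of_lt_of_le hN0 (by exact_mod_cast hNN0)
    have h1 : C / ((N:ℝ) * ϑ) < δ ^ s := by
      rw [div_lt_iff₀ (by positivity)] at hNbig ⊢
      nlinarith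
    have hrδ : (C / ((N:ℝ) * ϑ)) ^ (1 / s) < δ := by
      have := Real.rpow_lt_rpow (by positivity) h1 (by positivity : (0:ℝ) < 1 / s)
      rwa [← Real.rpow_mul hδ.le, mul_one_div_cancel hs.ne', Real.rpow_one] at this
    have hb0 : ((N : ℝ≥0∞)) ^ (1 / s) ≠ 0 := by
      simp [ENNReal.rpow_eq_zero_iff, hNpos.ne']
    have hbt : ((N : ℝ≥0∞)) ^ (1 / s) ≠ ⊤ := by
      exact ENNReal.rpow_ne_top_of_nonneg (by positivity) (ENNReal.natCast_ne_top N)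
    rw [quantErrN]
    simp_rw [ENNReal.mul_iInf_of_ne hb0 hbt]
    refine le_iInf fun S => le_iInf fun hS => le_iInf fun hcard => ?_
    exact quant_aux ν A hA p s ϑ δ C hp hs hϑ hδ hC hCA hconc N hNpos hrδ S hS hcard
  calc c = liminf (fun _ : ℕ => c) atTop := (liminf_const c).symm
    _ ≤ liminf (fun N : ℕ => (N : ℝ≥0∞) ^ (1 / s) * quantErrN (ν.restrict A) p N) atTop :=
        liminf_le_liminf hev
end

section
/- Let (X,ν) be a metric measure space with ν locally finite, and A ⊆ X compact such that ν(B_r(x)) ≥ ϑ r^s for all x ∈ A and 0 < r < δ, for some constants ϑ, δ, s > 0. Then limsup_{N→∞} N^{1/s} e_{N,∞}(A) ≤ 2 ϑ^{-1/s} ν(A)^{1/s}, where e_{N,∞}(A) is the smallest radius r such that A can be covered by N closed balls of radius r with centers in A. -/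
/-!
A maximal `2ρ`-separated subset of `A` is a `2ρ`-cover by points of `A`, and the balls of
radius `ρ` around its points are disjoint and lie in the `ρ`-thickening of `A`. Each of them
has mass at least `ϑ ρ^s`, so if `N ϑ ρ^s` exceeds `ν (thickening ρ A)`, the separated set has
at most `N` points and `e_N(A) ≤ 2ρ`. Given `V > ν(A)`, the radius `ρ_N = (V / (ϑ N))^{1/s}`
tends to `0`, so `ν (thickening ρ_N A) < V = N ϑ ρ_N^s` for large `N`; hence
`N^{1/s} e_N(A) ≤ 2 (V / ϑ)^{1/s}` eventually, and `V ↓ ν(A)` gives the bound.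
-/

open MeasureTheory Filter Metric Set
open scoped ENNReal NNReal Topology

/-- The `N`-th covering radius of `A`, with centers taken in `A`. -/
noncomputable def covRad {X : Type*} [MetricSpace X] (A : Set X) (N : ℕ) : ℝ≥0∞ :=
  ⨅ (S : Finset X) (_ : ↑S ⊆ A) (_ : S.Nonempty) (_ : S.card ≤ N),
    ⨆ x ∈ A, ENNReal.ofReal (infDist x (S : Set X))

lemma TotallyBounded.packingNumber_ne_top {X : Type*} [PseudoEMetricSpace X] {A : Set X}
    (hA : TotallyBounded A) {ε : ℝ≥0} (hε : ε ≠ 0) : packingNumber ε A ≠ ⊤ := by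
  obtain ⟨C, -, hC, hcov⟩ :=
    exists_finite_isCover_of_totallyBounded (ε := ε / 2) (by positivity) hA
  have := packingNumber_two_mul_le_externalCoveringNumber (ε / 2) A
  rw [mul_div_cancel₀ _ two_ne_zero] at this
  exact (this.trans hcov.externalCoveringNumber_le_encard |>.trans_lt hC.encard_lt_top).ne

section Packing

variable {X : Type*} [MetricSpace X] {A : Set X}

lemma covRad_le_of_isCover {N : ℕ} {ε : ℝ≥0} {C : Finset X} (hAne : A.Nonempty)
    (hCA : ↑C ⊆ A) (hcov : IsCover ε A C) (hCN : C.card ≤ N) : covRad A N ≤ ε := by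
  refine iInf₂_le_of_le C hCA <| iInf₂_le_of_le (hcov.nonempty hAne) hCN <|
    iSup₂_le fun x hx => ?_
  obtain ⟨y, hy, hxy : edist x y ≤ ε⟩ := hcov hx
  calc ENNReal.ofReal (infDist x C) ≤ ENNReal.ofReal (dist x y) :=
        ENNReal.ofReal_le_ofReal (infDist_le_dist_of_mem hy)
    _ = edist x y := (edist_dist x y).symm
    _ ≤ ε := hxy

variable [MeasurableSpace X] [OpensMeasurableSpace X] (ν : Measure X)

lemma Metric.IsSeparated.card_mul_le_measure_thickening {ρ : ℝ≥0} {m : ℝ≥0∞} {C : Finset X}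
    (hCA : ↑C ⊆ A) (hC : IsSeparated (2 * ρ) (C : Set X))
    (hm : ∀ x ∈ A, m ≤ ν (ball x ρ)) : C.card * m ≤ ν (thickening ρ A) := by
  have hdisj : (C : Set X).PairwiseDisjoint fun x => ball x ρ := by
    intro x hx y hy hxy
    have hsep : 2 * ρ < nndist x y := by
      have : 2 * ρ < edist x y := hC hx hy hxy
      rw [edist_nndist] at this
      exact_mod_cast this
    refine ball_disjoint_ball ?_
    rw [dist_nndist, ← two_mul]
    exact_mod_cast hsep.le
  calc C.card * m = ∑ _x ∈ C, m := by simp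
    _ ≤ ∑ x ∈ C, ν (ball x ρ) := Finset.sum_le_sum fun x hx => hm x (hCA hx)
    _ = ν (⋃ x ∈ C, ball x ρ) :=
      (measure_biUnion_finset hdisj fun _ _ => measurableSet_ball).symm
    _ ≤ ν (thickening ρ A) :=
      measure_mono <| iUnion₂_subset fun x hx => ball_subset_thickening (hCA hx) _

lemma covRad_le_of_measure_thickening_lt (hA : IsCompact A) (hAne : A.Nonempty)
    {ρ : ℝ≥0} (hρ : ρ ≠ 0) {m : ℝ≥0∞} {N : ℕ} (hm : ∀ x ∈ A, m ≤ ν (ball x ρ))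
    (hlt : ν (thickening ρ A) < N * m) : covRad A N ≤ ↑(2 * ρ) := by
  have hpack : packingNumber (2 * ρ) A ≠ ⊤ :=
    hA.totallyBounded.packingNumber_ne_top (by positivity)
  have hfin : (maximalSeparatedSet (2 * ρ) A).Finite :=
    encard_ne_top_iff.mp (by rwa [encard_maximalSeparatedSet hpack])
  have hCA : ↑hfin.toFinset ⊆ A := by simpa using maximalSeparatedSet_subset
  refine covRad_le_of_isCover hAne hCA (by simpa using isCover_maximalSeparatedSet hpack) ?_
  by_contra! hN
  have hpacking := IsSeparated.card_mul_le_measure_thickening ν hCA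
    (by exact_mod_cast (hfin.coe_toFinset ▸ isSeparated_maximalSeparatedSet)) hm
  exact (hlt.trans_le <| (mul_le_mul_left (by exact_mod_cast hN.le) m).trans hpacking).false

end Packing

lemma IsCompact.exists_pos_measure_thickening_ne_top {X : Type*} [PseudoMetricSpace X]
    [MeasurableSpace X] (ν : Measure X) [IsLocallyFiniteMeasure ν] {A : Set X}
    (hA : IsCompact A) : ∃ R > 0, ν (thickening R A) ≠ ∞ := by
  obtain ⟨U, hAU, hU, hνU⟩ := hA.exists_open_superset_measure_lt_top ν
  obtain ⟨R, hR, hRU⟩ := hA.exists_thickening_subset_open hU hAU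
  exact ⟨R, hR, (measure_mono hRU |>.trans_lt hνU).ne⟩

lemma Real.rpow_mul_rpow_div_mul {N ϑ V : ℝ} (hN : 0 < N) (hϑ : 0 < ϑ) (hV : 0 ≤ V) (s : ℝ) :
    N ^ s * (V / (ϑ * N)) ^ s = ϑ ^ (-s) * V ^ s := by
  rw [← Real.mul_rpow hN.le (by positivity), show N * (V / (ϑ * N)) = ϑ⁻¹ * V by field_simp,
    Real.mul_rpow (by positivity) hV, Real.inv_rpow hϑ.le, Real.rpow_neg hϑ.le]

section Asymptotics

variable {X : Type*} [MetricSpace X] [MeasurableSpace X] [BorelSpace X] (ν : Measure X)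
  [IsLocallyFiniteMeasure ν] {A : Set X} {ϑ δ s V : ℝ}

lemma eventually_covRad_le (hA : IsCompact A) (hAne : A.Nonempty) (hϑ : 0 < ϑ) (hδ : 0 < δ)
    (hs : 0 < s)
    (hconc : ∀ x ∈ A, ∀ r : ℝ, 0 < r → r < δ → ENNReal.ofReal (ϑ * r ^ s) ≤ ν (ball x r))
    (hV : ν A < ENNReal.ofReal V) :
    ∀ᶠ N : ℕ in atTop, covRad A N ≤ 2 * ENNReal.ofReal ((V / (ϑ * N)) ^ (1 / s)) := by
  set ρ : ℕ → ℝ := fun N => (V / (ϑ * N)) ^ (1 / s)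
  have hVpos : 0 < V := ENNReal.ofReal_pos.mp (zero_le.trans_lt hV)
  have hρpos : ∀ᶠ N : ℕ in atTop, 0 < ρ N := by
    filter_upwards [eventually_gt_atTop 0] with N hN
    positivity
  have hρ0 : Tendsto ρ atTop (𝓝 0) := by
    have := (tendsto_const_div_atTop_nhds_zero_nat (V / ϑ)).rpow_const
      (Or.inr (one_div_pos.2 hs).le)
    rw [Real.zero_rpow (one_div_pos.2 hs).ne'] at this
    simpa only [div_div] using this
  have hthick : ∀ᶠ N : ℕ in atTop, ν (thickening (ρ N) A) < ENNReal.ofReal V :=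
    ((tendsto_measure_thickening_of_isClosed (hA.exists_pos_measure_thickening_ne_top ν)
      hA.isClosed).comp (tendsto_nhdsWithin_iff.2 ⟨hρ0, hρpos⟩)).eventually_lt_const hV
  filter_upwards [hρpos, hρ0.eventually_lt_const hδ, hthick, eventually_gt_atTop 0]
    with N hpos hlt hN hN0
  have hmass : (N : ℝ≥0∞) * ENNReal.ofReal (ϑ * ρ N ^ s) = ENNReal.ofReal V := by
    rw [← Real.rpow_mul (by positivity), one_div_mul_cancel hs.ne', Real.rpow_one,
      ← ENNReal.ofReal_natCast, ← ENNReal.ofReal_mul (by positivity)]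
    congr 1
    field_simp
  exact covRad_le_of_measure_thickening_lt ν hA hAne (ρ := (ρ N).toNNReal)
    (by simpa using hpos) (m := ENNReal.ofReal (ϑ * ρ N ^ s))
    (fun x hx => by simpa [hpos.le] using hconc x hx _ hpos hlt) (by simpa [hpos.le, hmass])

lemma limsup_rpow_mul_covRad_le (hA : IsCompact A) (hAne : A.Nonempty) (hϑ : 0 < ϑ)
    (hδ : 0 < δ) (hs : 0 < s)
    (hconc : ∀ x ∈ A, ∀ r : ℝ, 0 < r → r < δ → ENNReal.ofReal (ϑ * r ^ s) ≤ ν (ball x r))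
    (hV : ν A < ENNReal.ofReal V) :
    limsup (fun N : ℕ => (N : ℝ≥0∞) ^ (1 / s) * covRad A N) atTop ≤
      ENNReal.ofReal (2 * ϑ ^ (-(1 / s))) * ENNReal.ofReal V ^ (1 / s) := by
  have hV0 : 0 ≤ V := (ENNReal.ofReal_pos.mp (zero_le.trans_lt hV)).le
  refine limsup_le_of_le (by isBoundedDefault) ?_
  filter_upwards [eventually_covRad_le ν hA hAne hϑ hδ hs hconc hV, eventually_gt_atTop 0]
    with N hN hN0
  calc (N : ℝ≥0∞) ^ (1 / s) * covRad A N
      ≤ (N : ℝ≥0∞) ^ (1 / s) * (2 * ENNReal.ofReal ((V / (ϑ * N)) ^ (1 / s))) := by gcongr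
    _ = ENNReal.ofReal (2 * (N ^ (1 / s) * (V / (ϑ * N)) ^ (1 / s))) := by
      rw [← ENNReal.ofReal_natCast, ENNReal.ofReal_rpow_of_nonneg (by positivity)
        (one_div_pos.2 hs).le, ENNReal.ofReal_mul zero_le_two, ENNReal.ofReal_ofNat,
        ENNReal.ofReal_mul (by positivity), mul_left_comm]
    _ = ENNReal.ofReal (2 * ϑ ^ (-(1 / s))) * ENNReal.ofReal V ^ (1 / s) := by
      rw [Real.rpow_mul_rpow_div_mul (by positivity) hϑ hV0, ← mul_assoc,
        ENNReal.ofReal_mul (by positivity),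
        ENNReal.ofReal_rpow_of_nonneg hV0 (one_div_pos.2 hs).le]

end Asymptotics

/-- upper bound for the covering radii from a lower
concentration bound on ball volumes. -/
theorem stmt_12 {X : Type*} [MetricSpace X] [MeasurableSpace X] [BorelSpace X]
    (ν : Measure X) [IsLocallyFiniteMeasure ν]
    (A : Set X) (hA : IsCompact A) (hAne : A.Nonempty)
    (ϑ δ s : ℝ) (hϑ : 0 < ϑ) (hδ : 0 < δ) (hs : 0 < s)
    (hconc : ∀ x ∈ A, ∀ r : ℝ, 0 < r → r < δ →
      ENNReal.ofReal (ϑ * r ^ s) ≤ ν (ball x r)) :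
    limsup (fun N : ℕ => (N : ℝ≥0∞) ^ (1 / s) * covRad A N) atTop ≤
      ENNReal.ofReal (2 * ϑ ^ (-(1 / s))) * ν A ^ (1 / s) := by
  have hνA : ν A < ∞ := hA.measure_lt_top
  have : (𝓝[>] (ν A)).NeBot := nhdsGT_neBot_of_exists_gt ⟨∞, hνA⟩
  have hcont : Tendsto (fun V : ℝ≥0∞ => ENNReal.ofReal (2 * ϑ ^ (-(1 / s))) * V ^ (1 / s))
      (𝓝[>] (ν A)) (𝓝 (ENNReal.ofReal (2 * ϑ ^ (-(1 / s))) * ν A ^ (1 / s))) :=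
    (ENNReal.Tendsto.const_mul (ENNReal.continuous_rpow_const.tendsto _)
      (Or.inr ENNReal.ofReal_ne_top)).mono_left nhdsWithin_le_nhds
  refine ge_of_tendsto hcont ?_
  filter_upwards [Ioo_mem_nhdsGT hνA] with V ⟨hAV, hV⟩
  rw [← ENNReal.ofReal_toReal hV.ne] at hAV ⊢
  exact limsup_rpow_mul_covRad_le ν hA hAne hϑ hδ hs hconc hAV
end

section
/- Let (X,ν) be a metric measure space with ν locally finite, 0 < m ≤ s, and A ⊆ X compact with ν(B_r(x)) ≥ ϑ r^s for all x ∈ A, r < δ. Then limsup_{N→∞} N · e_{N,∞}(A)^m ≤ 2^m ω_{s-m} ϑ^{-1} · limsup_{r→0⁺} ν(A^r)/(ω_{s-m} r^{s-m}), where A^r = {x : d(x,A) < r} and the limsup on the right is the m-dimensional upper Minkowski content of A relative to ν. -/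
open MeasureTheory Filter Metric Set
open scoped ENNReal NNReal Topology

/-- The constant coinciding with the volume of the unit ball in integer dimension. -/
noncomputable def unitBallVol (t : ℝ) : ℝ := Real.pi ^ (t / 2) / Real.Gamma (1 + t / 2)

/-!
If `e = covRad A N` is positive, `A` contains `N + 1` points at mutual distance at least `e`:
otherwise a maximal `e`-separated subset of `A` has at most `N` points and is a net whose
covering radius is `< e`, because on the compact set `A` the supremum of the distance to the net
is attained. The balls of radius `e / 2` around these points are disjoint, lie in the
thickening `A^{e/2}` and have measure at least `ϑ (e/2)^s` each, so
`N e^m ≤ 2^m ω_{s-m} ϑ⁻¹ · ν(A^{e/2}) / (ω_{s-m} (e/2)^{s-m})`.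
As `e → 0⁺` when `N → ∞`, passing to the limsup gives the bound.
-/

section CoveringRadius

variable {X : Type*} [MetricSpace X] {A : Set X}

lemma covRad_le_iSup_infDist {N : ℕ} {S : Finset X} (hSA : ↑S ⊆ A) (hS : S.Nonempty)
    (hcard : S.card ≤ N) : covRad A N ≤ ⨆ x ∈ A, ENNReal.ofReal (infDist x (S : Set X)) :=
  iInf_le_of_le S <| iInf_le_of_le hSA <| iInf_le_of_le hS <| iInf_le _ hcard

lemma covRad_antitone (A : Set X) : Antitone (covRad A) := fun _ _ hMN =>
  le_iInf fun _ => le_iInf fun hSA => le_iInf fun hS => le_iInf fun hcard =>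
    covRad_le_iSup_infDist hSA hS (hcard.trans hMN)

lemma IsCompact.covRad_lt_of_forall_exists_dist_lt (hA : IsCompact A) {N : ℕ} {S : Finset X}
    (hSA : ↑S ⊆ A) (hS : S.Nonempty) (hcard : S.card ≤ N) {r : ℝ}
    (hcover : ∀ x ∈ A, ∃ y ∈ S, dist x y < r) : covRad A N < ENNReal.ofReal r := by
  obtain ⟨x₀, hx₀A, hx₀max⟩ := hA.exists_isMaxOn (hS.to_set.mono hSA)
    (continuous_infDist_pt (S : Set X)).continuousOn
  obtain ⟨y, hyS, hxy⟩ := hcover x₀ hx₀A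
  have hlt : infDist x₀ (S : Set X) < r :=
    (infDist_le_dist_of_mem (Finset.mem_coe.2 hyS)).trans_lt hxy
  calc covRad A N ≤ ENNReal.ofReal (infDist x₀ (S : Set X)) :=
        covRad_le_iSup_infDist hSA hS hcard |>.trans <| iSup₂_le fun x hx =>
          ENNReal.ofReal_le_ofReal (hx₀max hx)
    _ < ENNReal.ofReal r := (ENNReal.ofReal_lt_ofReal_iff (infDist_nonneg.trans_lt hlt)).2 hlt

lemma exists_separated_finset_or_exists_covering_finset (A : Set X) (N : ℕ) {r : ℝ}
    (hr : 0 < r) :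
    (∃ S : Finset X, ↑S ⊆ A ∧ S.card = N + 1 ∧ (S : Set X).Pairwise (r ≤ dist · ·)) ∨
      ∃ S : Finset X, ↑S ⊆ A ∧ S.card ≤ N ∧ ∀ x ∈ A, ∃ y ∈ S, dist x y < r := by
  classical
  let P : ℕ → Prop := fun k =>
    ∃ S : Finset X, ↑S ⊆ A ∧ S.card = k ∧ (S : Set X).Pairwise (r ≤ dist · ·)
  have hP0 : P 0 := ⟨∅, by simp, rfl, by simp⟩
  obtain ⟨S, hSA, hcard, hsep⟩ : P (Nat.findGreatest P (N + 1)) :=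
    Nat.findGreatest_spec (Nat.zero_le _) hP0
  rcases (Nat.findGreatest_le (P := P) (N + 1)).eq_or_lt with hmax | hlt
  · exact Or.inl ⟨S, hSA, hcard.trans hmax, hsep⟩
  refine Or.inr ⟨S, hSA, by omega, fun x hx => ?_⟩
  by_contra! hfar
  have hxS : x ∉ S := fun hxS => hr.not_ge (by simpa using hfar x hxS)
  have hlarger : P (S.card + 1) := by
    refine ⟨insert x S, ?_, Finset.card_insert_of_notMem hxS, ?_⟩
    · simpa using insert_subset hx hSA
    · rw [Finset.coe_insert]
      exact hsep.insert fun y hy _ => ⟨hfar y hy, dist_comm x y ▸ hfar y hy⟩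
  exact Nat.findGreatest_is_greatest (P := P) (n := N + 1) (by omega) (by omega) hlarger

lemma IsCompact.exists_separated_finset_of_ofReal_le_covRad (hA : IsCompact A)
    (hAne : A.Nonempty) {N : ℕ} {r : ℝ} (hr : 0 < r) (hrN : ENNReal.ofReal r ≤ covRad A N) :
    ∃ S : Finset X, ↑S ⊆ A ∧ S.card = N + 1 ∧ (S : Set X).Pairwise (r ≤ dist · ·) := by
  refine (exists_separated_finset_or_exists_covering_finset A N hr).resolve_right ?_
  rintro ⟨S, hSA, hcard, hcover⟩
  obtain ⟨a, ha⟩ := hAne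
  obtain ⟨y, hyS, -⟩ := hcover a ha
  exact (hA.covRad_lt_of_forall_exists_dist_lt hSA ⟨y, hyS⟩ hcard hcover).not_ge hrN

lemma IsCompact.tendsto_covRad_atTop_nhds_zero (hA : IsCompact A) (hAne : A.Nonempty) :
    Tendsto (covRad A) atTop (𝓝 0) := by
  refine ENNReal.tendsto_nhds_zero.2 fun ε hε => ?_
  obtain ⟨r, -, hr0, hrε⟩ := ENNReal.lt_iff_exists_real_btwn.1 hε
  have hr : 0 < r := ENNReal.ofReal_pos.1 hr0
  obtain ⟨t, htA, hcover⟩ :=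
    hA.elim_nhds_subcover (fun x => ball x r) fun x _ => ball_mem_nhds x hr
  have hcover' : ∀ x ∈ A, ∃ y ∈ t, dist x y < r := fun x hx => by
    simpa using hcover hx
  have ht : t.Nonempty := by
    obtain ⟨a, ha⟩ := hAne
    obtain ⟨y, hyt, -⟩ := hcover' a ha
    exact ⟨y, hyt⟩
  have hlt := hA.covRad_lt_of_forall_exists_dist_lt htA ht le_rfl hcover'
  filter_upwards [eventually_ge_atTop t.card] with N hN
  exact (covRad_antitone A hN).trans (hlt.trans hrε).le

lemma add_one_mul_le_measure_thickening_half_covRad [MeasurableSpace X] [OpensMeasurableSpace X]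
    (ν : Measure X) (hA : IsCompact A) (hAne : A.Nonempty) {N : ℕ} (hN0 : covRad A N ≠ 0)
    (hNtop : covRad A N ≠ ⊤) {c : ℝ≥0∞}
    (hball : ∀ x ∈ A, c ≤ ν (ball x ((covRad A N).toReal / 2))) :
    (N + 1) * c ≤ ν (thickening ((covRad A N).toReal / 2) A) := by
  set ρ := (covRad A N).toReal / 2
  obtain ⟨S, hSA, hcard, hsep⟩ := hA.exists_separated_finset_of_ofReal_le_covRad hAne
    (ENNReal.toReal_pos hN0 hNtop) ENNReal.ofReal_toReal_le
  have hdisj : (S : Set X).PairwiseDisjoint (ball · ρ) := hsep.mono' fun x y hxy =>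
    ball_disjoint_ball ((add_halves _).trans_le hxy)
  calc (N + 1) * c = ∑ _x ∈ S, c := by simp [hcard]
    _ ≤ ∑ x ∈ S, ν (ball x ρ) := Finset.sum_le_sum fun x hx => hball x (hSA hx)
    _ = ν (⋃ x ∈ S, ball x ρ) := (measure_biUnion_finset hdisj fun _ _ => measurableSet_ball).symm
    _ ≤ ν (thickening ρ A) :=
      measure_mono <| iUnion₂_subset fun x hx => ball_subset_thickening (hSA hx) ρ

end CoveringRadius

lemma unitBallVol_pos {t : ℝ} (ht : 0 ≤ t) : 0 < unitBallVol t :=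
  div_pos (Real.rpow_pos_of_pos Real.pi_pos _) (Real.Gamma_pos_of_pos (by linarith))

lemma natCast_mul_ofReal_two_mul_rpow_le {N : ℕ} {ρ m s ϑ ω : ℝ} {V : ℝ≥0∞}
    (hρ : 0 < ρ) (hϑ : 0 < ϑ) (hω : 0 < ω)
    (hV : (N + 1) * ENNReal.ofReal (ϑ * ρ ^ s) ≤ V) :
    (N : ℝ≥0∞) * ENNReal.ofReal (2 * ρ) ^ m ≤
      ENNReal.ofReal (2 ^ m * ω * ϑ⁻¹) * (V / ENNReal.ofReal (ω * ρ ^ (s - m))) := by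
  have hb : 0 < ϑ * ρ ^ s := by positivity
  have hq : 2 ^ m * ω * ϑ⁻¹ / (ω * ρ ^ (s - m)) = (2 * ρ) ^ m / (ϑ * ρ ^ s) := by
    rw [Real.mul_rpow two_pos.le hρ.le, Real.rpow_sub hρ]
    field_simp
  calc (N : ℝ≥0∞) * ENNReal.ofReal (2 * ρ) ^ m
      = N * ENNReal.ofReal (ϑ * ρ ^ s) * ENNReal.ofReal ((2 * ρ) ^ m / (ϑ * ρ ^ s)) := by
        rw [ENNReal.ofReal_rpow_of_pos (by positivity), mul_assoc, ← ENNReal.ofReal_mul hb.le,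
          mul_div_cancel₀ _ hb.ne']
    _ ≤ V * ENNReal.ofReal ((2 * ρ) ^ m / (ϑ * ρ ^ s)) := by
        gcongr
        exact (mul_le_mul_left le_self_add _).trans hV
    _ = _ := by
        rw [← hq, ENNReal.ofReal_div_of_pos (by positivity), div_eq_mul_inv, div_eq_mul_inv]
        ring

lemma natCast_mul_covRad_rpow_le {X : Type*} [MetricSpace X] [MeasurableSpace X]
    [OpensMeasurableSpace X] (ν : Measure X) {A : Set X} (hA : IsCompact A) (hAne : A.Nonempty)
    {m s ϑ δ : ℝ} (hms : m ≤ s) (hϑ : 0 < ϑ)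
    (hconc : ∀ x ∈ A, ∀ r : ℝ, 0 < r → r < δ → ENNReal.ofReal (ϑ * r ^ s) ≤ ν (ball x r))
    {N : ℕ} (hN0 : covRad A N ≠ 0) (hNδ : covRad A N < ENNReal.ofReal (2 * δ)) :
    (N : ℝ≥0∞) * covRad A N ^ m ≤ ENNReal.ofReal (2 ^ m * unitBallVol (s - m) * ϑ⁻¹) *
      (ν (thickening ((covRad A N).toReal / 2) A) /
        ENNReal.ofReal (unitBallVol (s - m) * ((covRad A N).toReal / 2) ^ (s - m))) := by
  have hρ : 0 < (covRad A N).toReal / 2 := half_pos (ENNReal.toReal_pos hN0 hNδ.ne_top)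
  have hρδ : (covRad A N).toReal / 2 < δ := by
    linarith [ENNReal.toReal_lt_of_lt_ofReal hNδ]
  have hpack := add_one_mul_le_measure_thickening_half_covRad ν hA hAne hN0 hNδ.ne_top
    fun x hx => hconc x hx _ hρ hρδ
  have := natCast_mul_ofReal_two_mul_rpow_le (m := m) hρ hϑ
    (unitBallVol_pos (sub_nonneg.2 hms)) hpack
  rwa [mul_div_cancel₀ _ two_ne_zero, ENNReal.ofReal_toReal hNδ.ne_top] at this

theorem stmt_13_general {X : Type*} [MetricSpace X] [MeasurableSpace X] [BorelSpace X]
    (ν : Measure X)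
    (A : Set X) (hA : IsCompact A) (hAne : A.Nonempty)
    (m s ϑ δ : ℝ) (hm : 0 < m) (hms : m ≤ s) (hϑ : 0 < ϑ) (hδ : 0 < δ)
    (hconc : ∀ x ∈ A, ∀ r : ℝ, 0 < r → r < δ →
      ENNReal.ofReal (ϑ * r ^ s) ≤ ν (ball x r)) :
    limsup (fun N : ℕ => (N : ℝ≥0∞) * covRad A N ^ m) atTop ≤
      ENNReal.ofReal (2 ^ m * unitBallVol (s - m) * ϑ⁻¹) *
        limsup (fun r : ℝ =>
          ν (thickening r A) / ENNReal.ofReal (unitBallVol (s - m) * r ^ (s - m)))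
          (𝓝[>] (0 : ℝ)) := by
  set C := ENNReal.ofReal (2 ^ m * unitBallVol (s - m) * ϑ⁻¹)
  set f : ℝ → ℝ≥0∞ := fun r =>
    ν (thickening r A) / ENNReal.ofReal (unitBallVol (s - m) * r ^ (s - m))
  by_cases hzero : ∃ N, covRad A N = 0
  · obtain ⟨N₀, hN₀⟩ := hzero
    have hevent : (fun N : ℕ => (N : ℝ≥0∞) * covRad A N ^ m) =ᶠ[atTop] 0 := by
      filter_upwards [eventually_ge_atTop N₀] with N hN
      have hN0 : covRad A N = 0 := nonpos_iff_eq_zero.1 (hN₀ ▸ covRad_antitone A hN)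
      rw [hN0, ENNReal.zero_rpow_of_pos hm, mul_zero, Pi.zero_apply]
    rw [limsup_congr hevent, Pi.zero_def, limsup_const]
    exact zero_le
  simp only [not_exists] at hzero
  have htendsto := hA.tendsto_covRad_atTop_nhds_zero hAne
  have hsmall : ∀ᶠ N : ℕ in atTop, covRad A N < ENNReal.ofReal (2 * δ) :=
    htendsto.eventually (gt_mem_nhds (ENNReal.ofReal_pos.2 (by positivity)))
  set ρ : ℕ → ℝ := fun N => (covRad A N).toReal / 2
  have hρ : Tendsto ρ atTop (𝓝[>] 0) := by
    refine tendsto_nhdsWithin_iff.2 ⟨?_, hsmall.mono fun N hN =>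
      half_pos (ENNReal.toReal_pos (hzero N) hN.ne_top)⟩
    simpa [ρ] using ((ENNReal.tendsto_toReal ENNReal.zero_ne_top).comp htendsto).div_const 2
  calc limsup (fun N : ℕ => (N : ℝ≥0∞) * covRad A N ^ m) atTop
      ≤ limsup (fun N => C * f (ρ N)) atTop :=
        limsup_le_limsup <| hsmall.mono fun N hN =>
          natCast_mul_covRad_rpow_le ν hA hAne hms hϑ hconc (hzero N) hN
    _ = C * limsup (f ∘ ρ) atTop := ENNReal.limsup_const_mul_of_ne_top ENNReal.ofReal_ne_top
    _ ≤ C * limsup f (𝓝[>] 0) := by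
        rw [limsup_comp]
        gcongr
        exact limsup_le_limsup_of_le hρ

/-- Minkowski-content upper bound for covering radii of dimension m ≤ s. -/
theorem stmt_13 {X : Type*} [MetricSpace X] [MeasurableSpace X] [BorelSpace X]
    (ν : Measure X) [IsLocallyFiniteMeasure ν]
    (A : Set X) (hA : IsCompact A) (hAne : A.Nonempty)
    (m s ϑ δ : ℝ) (hm : 0 < m) (hms : m ≤ s) (hϑ : 0 < ϑ) (hδ : 0 < δ)
    (hconc : ∀ x ∈ A, ∀ r : ℝ, 0 < r → r < δ →
      ENNReal.ofReal (ϑ * r ^ s) ≤ ν (ball x r)) :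
    limsup (fun N : ℕ => (N : ℝ≥0∞) * covRad A N ^ m) atTop ≤
      ENNReal.ofReal (2 ^ m * unitBallVol (s - m) * ϑ⁻¹) *
        limsup (fun r : ℝ =>
          ν (thickening r A) / ENNReal.ofReal (unitBallVol (s - m) * r ^ (s - m)))
          (𝓝[>] (0 : ℝ)) :=
  stmt_13_general ν A hA hAne m s ϑ δ hm hms hϑ hδ hconc
end

section
/- Let X be a Polish metric space, p ∈ [1,∞), s > 0, and μ a finite Borel measure with finite p-th moment. Suppose there is a measurable F : X → [0,∞] with ∫ F dμ < ∞ such that limsup_N (N^{1/s} e_{N,p}(ν))^p ≤ ∫ F dν for every Borel measure ν ≤ μ. Then for any sequence of Borel measures μ_n ≤ μ with μ_n(X) → 0, one has limsup_N N^{1/s} e_{N,p}(μ_n) → 0 as n → ∞ (i.e., μ is (p,s)-quantizable). -/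
open MeasureTheory Filter Metric Set
open scoped ENNReal NNReal Topology

/-- Tail integrals of an integrable `F` tend to zero. -/
lemma tail_tendsto_zero {X : Type*} [MeasurableSpace X] (μ : Measure X)
    (F : X → ℝ≥0∞) (hF : Measurable F) (hFint : ∫⁻ x, F x ∂μ < ⊤) :
    Tendsto (fun M : ℕ => ∫⁻ x in {x | (M : ℝ≥0∞) < F x}, F x ∂μ) atTop (𝓝 0) := by
  have hae : ∀ᵐ x ∂μ, F x < ⊤ := ae_lt_top hF hFint.ne
  have hmeas : ∀ M : ℕ, MeasurableSet {x | (M : ℝ≥0∞) < F x} := fun M =>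
    measurableSet_lt measurable_const hF
  have h := tendsto_lintegral_of_dominated_convergence (μ := μ)
    (F := fun M : ℕ => ({x | (M : ℝ≥0∞) < F x}).indicator F) (f := fun _ => 0)
    (bound := F)
    (fun M => hF.indicator (hmeas M))
    (fun M => Filter.Eventually.of_forall (fun x => Set.indicator_le_self _ _ x))
    hFint.ne
    (by
      filter_upwards [hae] with x hx
      obtain ⟨n, hn⟩ := ENNReal.exists_nat_gt hx.ne
      have : ∀ m ≥ n, ({x | (m : ℝ≥0∞) < F x}).indicator F x = 0 := by
        intro m hm
        have : ¬ ((m : ℝ≥0∞) < F x) := by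
          push_neg
          exact le_trans hn.le (by exact_mod_cast Nat.cast_le.2 hm)
        simp [Set.indicator_of_notMem, this]
      exact tendsto_atTop_of_eventually_const this)
  simpa using h.congr (fun M => lintegral_indicator (hmeas M) F)

/-- a Pierce-type integral upper bound implies (p,s)-quantizability. -/
theorem stmt_14 {X : Type*} [MetricSpace X] [CompleteSpace X]
    [TopologicalSpace.SeparableSpace X] [MeasurableSpace X] [BorelSpace X]
    (μ : Measure X) [IsFiniteMeasure μ] (p s : ℝ) (hp : 1 ≤ p) (hs : 0 < s)
    (hmom : ∃ x₀ : X, ∫⁻ x, ENNReal.ofReal (dist x x₀ ^ p) ∂μ < ⊤)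
    (F : X → ℝ≥0∞) (hF : Measurable F) (hFint : ∫⁻ x, F x ∂μ < ⊤)
    (hbound : ∀ ν : Measure X, ν ≤ μ →
      upperQuantCoeff ν p s ^ p ≤ ∫⁻ x, F x ∂ν) :
    ∀ μn : ℕ → Measure X, (∀ n, μn n ≤ μ) →
      Tendsto (fun n => μn n Set.univ) atTop (𝓝 0) →
      Tendsto (fun n => upperQuantCoeff (μn n) p s) atTop (𝓝 0) := by
  intro μn hle hzero
  have hp0 : (0:ℝ) < p := lt_of_lt_of_le one_pos hp
  -- Step 1: ∫ F dμn → 0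
  have hI : Tendsto (fun n => ∫⁻ x, F x ∂(μn n)) atTop (𝓝 0) := by
    rw [ENNReal.tendsto_atTop_zero]
    intro ε hε
    obtain ⟨M, hM⟩ := ENNReal.tendsto_atTop_zero.mp (tail_tendsto_zero μ F hF hFint)
      (ε / 2) (ENNReal.half_pos hε.ne')
    have hMtail := hM M le_rfl
    have h2 : Tendsto (fun n => (M : ℝ≥0∞) * μn n Set.univ) atTop (𝓝 0) := by
      have := ENNReal.Tendsto.const_mul hzero (Or.inr (ENNReal.natCast_ne_top M))
      simpa using this
    obtain ⟨N, hN⟩ := ENNReal.tendsto_atTop_zero.mp h2 (ε / 2) (ENNReal.half_pos hε.ne')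
    refine ⟨N, fun n hn => ?_⟩
    have hmeas : MeasurableSet {x | (M : ℝ≥0∞) < F x} :=
      measurableSet_lt measurable_const hF
    have hsplit : ∫⁻ x, F x ∂(μn n)
        = ∫⁻ x in {x | (M : ℝ≥0∞) < F x}, F x ∂(μn n)
          + ∫⁻ x in {x | (M : ℝ≥0∞) < F x}ᶜ, F x ∂(μn n) :=
      (lintegral_add_compl F hmeas).symm
    have h1 : ∫⁻ x in {x | (M : ℝ≥0∞) < F x}, F x ∂(μn n)
        ≤ ∫⁻ x in {x | (M : ℝ≥0∞) < F x}, F x ∂μ :=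
      lintegral_mono' (Measure.restrict_mono le_rfl (hle n)) le_rfl
    have h3 : ∫⁻ x in {x | (M : ℝ≥0∞) < F x}ᶜ, F x ∂(μn n)
        ≤ (M : ℝ≥0∞) * μn n Set.univ := by
      calc ∫⁻ x in {x | (M : ℝ≥0∞) < F x}ᶜ, F x ∂(μn n)
          ≤ ∫⁻ _ in {x | (M : ℝ≥0∞) < F x}ᶜ, (M : ℝ≥0∞) ∂(μn n) := by
            refine setLIntegral_mono' hmeas.compl (fun x hx => ?_)
            simpa [not_lt] using hx
        _ = (M : ℝ≥0∞) * μn n {x | (M : ℝ≥0∞) < F x}ᶜ := by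
            simp [setLIntegral_const]
        _ ≤ (M : ℝ≥0∞) * μn n Set.univ :=
            mul_le_mul_right (measure_mono (Set.subset_univ _)) _
    calc ∫⁻ x, F x ∂(μn n)
        ≤ ε / 2 + ε / 2 := by
          rw [hsplit]
          exact add_le_add (h1.trans hMtail) (h3.trans (hN n hn))
      _ = ε := ENNReal.add_halves ε
  -- Step 2: conclude via the Pierce bound
  have key : ∀ n, upperQuantCoeff (μn n) p s ≤ (∫⁻ x, F x ∂(μn n)) ^ (1 / p) := by
    intro n
    have h := hbound (μn n) (hle n)
    have heq : (upperQuantCoeff (μn n) p s ^ p) ^ (1 / p)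
        = upperQuantCoeff (μn n) p s := by
      rw [← ENNReal.rpow_mul, mul_one_div_cancel hp0.ne', ENNReal.rpow_one]
    calc upperQuantCoeff (μn n) p s
        = (upperQuantCoeff (μn n) p s ^ p) ^ (1 / p) := heq.symm
      _ ≤ (∫⁻ x, F x ∂(μn n)) ^ (1 / p) :=
          ENNReal.rpow_le_rpow h (by positivity)
  rw [ENNReal.tendsto_atTop_zero]
  intro ε hε
  rcases eq_or_ne ε ⊤ with rfl | hεtop
  · exact ⟨0, fun n _ => le_top⟩
  have hεp : 0 < ε ^ p := ENNReal.rpow_pos hε hεtop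
  obtain ⟨N, hN⟩ := ENNReal.tendsto_atTop_zero.mp hI (ε ^ p) hεp
  refine ⟨N, fun n hn => ?_⟩
  calc upperQuantCoeff (μn n) p s
      ≤ (∫⁻ x, F x ∂(μn n)) ^ (1 / p) := key n
    _ ≤ (ε ^ p) ^ (1 / p) := ENNReal.rpow_le_rpow (hN n hn) (by positivity)
    _ = ε := by rw [← ENNReal.rpow_mul, mul_one_div_cancel hp0.ne', ENNReal.rpow_one]
end

section
/- Let T : X → Y be a Lipschitz map between Polish metric spaces, p ∈ [1,∞), s > 0, and μ a (p,s)-quantizable finite Borel measure on X with finite p-th moment. Then the pushforward T_♯μ is (p,s)-quantizable on Y. -/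
/-!
Under pushforward by an `L`-Lipschitz map the `N`-point quantization error grows by at most the
factor `L`: the image of an `N`-point codebook is an `N`-point codebook, and
`infDist (T x) (T '' S) ≤ L · infDist x S`. A submeasure `ν ≤ T_♯μ` lifts to the submeasure
`(dν/dT_♯μ ∘ T) · μ ≤ μ` with the same total mass whose pushforward is `ν`, so quantizability of
`μ` transfers to `T_♯μ`.
-/

open MeasureTheory Filter Metric Set
open scoped ENNReal NNReal Topology

/-- A measure is (p,s)-quantizable if the upper quantization coefficients of
submeasures with vanishing total mass tend to zero. -/
def Quantizable {X : Type*} [MetricSpace X] [MeasurableSpace X]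
    (μ : Measure X) (p s : ℝ) : Prop :=
  ∀ μn : ℕ → Measure X, (∀ n, μn n ≤ μ) →
    Tendsto (fun n => μn n Set.univ) atTop (𝓝 0) →
    Tendsto (fun n => upperQuantCoeff (μn n) p s) atTop (𝓝 0)

namespace MeasureTheory.Measure

variable {X Y : Type*} [MeasurableSpace X] [MeasurableSpace Y]

theorem map_withDensity_comp {T : X → Y} (hT : Measurable T) {g : Y → ℝ≥0∞} (hg : Measurable g)
    (μ : Measure X) : (μ.withDensity (g ∘ T)).map T = (μ.map T).withDensity g := by
  ext s hs
  rw [map_apply hT hs, withDensity_apply _ (hT hs), withDensity_apply _ hs,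
    setLIntegral_map hs hg hT, Function.comp_def]

theorem exists_le_map_eq_of_le_map {μ : Measure X} [IsFiniteMeasure μ] {T : X → Y}
    (hT : Measurable T) {ν : Measure Y} (hν : ν ≤ μ.map T) : ∃ σ ≤ μ, σ.map T = ν := by
  have : IsFiniteMeasure ν := isFiniteMeasure_of_le _ hν
  set ρ := ν.rnDeriv (μ.map T)
  have hρ_le_one : ∀ᵐ x ∂μ, ρ (T x) ≤ 1 :=
    (ae_map_iff hT.aemeasurable (measurableSet_le (measurable_rnDeriv _ _) measurable_const)).mp
      (rnDeriv_le_one_of_le hν)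
  refine ⟨μ.withDensity (ρ ∘ T), ?_, ?_⟩
  · calc μ.withDensity (ρ ∘ T) ≤ μ.withDensity 1 := withDensity_mono hρ_le_one
      _ = μ := withDensity_one
  · rw [map_withDensity_comp hT (measurable_rnDeriv _ _)]
    exact withDensity_rnDeriv_eq _ _ (absolutelyContinuous_of_le hν)

end MeasureTheory.Measure

theorem LipschitzWith.infDist_image_le {X Y : Type*} [PseudoMetricSpace X] [PseudoMetricSpace Y]
    {L : ℝ≥0} {T : X → Y} (hT : LipschitzWith L T) (x : X) (S : Set X) :
    infDist (T x) (T '' S) ≤ L * infDist x S := by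
  rcases S.eq_empty_or_nonempty with rfl | hS
  · simp
  have : Nonempty S := hS.to_subtype
  calc infDist (T x) (T '' S) ≤ ⨅ y : S, L * dist x y :=
        le_ciInf fun y => (infDist_le_dist_of_mem (mem_image_of_mem T y.2)).trans
          (hT.dist_le_mul x y)
    _ = L * infDist x S := by rw [infDist_eq_iInf, Real.mul_iInf_of_nonneg L.coe_nonneg]

section Quantization

variable {X Y : Type*} [MetricSpace X] [MeasurableSpace X] [MetricSpace Y] [MeasurableSpace Y]

theorem quantErr_map_image_le {L : ℝ≥0} {T : X → Y} (hT : LipschitzWith L T) (σ : Measure X)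
    {p : ℝ} (hp : 0 < p) (S : Set X) :
    quantErr (σ.map T) p (T '' S) ≤ L * quantErr σ p S := by
  have hpointwise : ∀ x, ENNReal.ofReal (infDist (T x) (T '' S) ^ p)
      ≤ (L : ℝ≥0∞) ^ p * ENNReal.ofReal (infDist x S ^ p) := fun x => by
    rw [← ENNReal.ofReal_rpow_of_nonneg infDist_nonneg hp.le,
      ← ENNReal.ofReal_rpow_of_nonneg infDist_nonneg hp.le, ← ENNReal.mul_rpow_of_nonneg _ _ hp.le,
      ← ENNReal.ofReal_coe_nnreal, ← ENNReal.ofReal_mul L.coe_nonneg]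
    gcongr
    exact hT.infDist_image_le x S
  calc quantErr (σ.map T) p (T '' S)
      ≤ ((L : ℝ≥0∞) ^ p * ∫⁻ x, ENNReal.ofReal (infDist x S ^ p) ∂σ) ^ (1 / p) := by
        rw [quantErr, ← lintegral_const_mul' _ _ (by simp [hp.le])]
        gcongr
        exact (lintegral_map_le _ T).trans (lintegral_mono hpointwise)
    _ = L * quantErr σ p S := by
        rw [ENNReal.mul_rpow_of_nonneg _ _ (by positivity), ← ENNReal.rpow_mul,
          mul_one_div_cancel hp.ne', ENNReal.rpow_one, quantErr]

theorem quantErrN_eq_iInf_subtype (μ : Measure X) (p : ℝ) (N : ℕ) :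
    quantErrN μ p N = ⨅ S : {S : Finset X // S.Nonempty ∧ S.card ≤ N}, quantErr μ p S.1 := by
  rw [quantErrN, iInf_subtype]
  exact iInf_congr fun S => by rw [iInf_and]

theorem quantErrN_map_le [Nonempty X] {L : ℝ≥0} {T : X → Y} (hT : LipschitzWith L T)
    (σ : Measure X) {p : ℝ} (hp : 0 < p) {N : ℕ} (hN : 1 ≤ N) :
    quantErrN (σ.map T) p N ≤ L * quantErrN σ p N := by
  classical
  obtain ⟨x⟩ : Nonempty X := inferInstance
  have : Nonempty {S : Finset X // S.Nonempty ∧ S.card ≤ N} :=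
    ⟨⟨{x}, Finset.singleton_nonempty x, by simpa using hN⟩⟩
  rw [quantErrN_eq_iInf_subtype, quantErrN_eq_iInf_subtype, ENNReal.mul_iInf (by simp)]
  refine le_iInf fun S => iInf_le_of_le
    ⟨S.1.image T, S.2.1.image T, Finset.card_image_le.trans S.2.2⟩ ?_
  simpa only [Finset.coe_image] using quantErr_map_image_le hT σ hp S.1

theorem upperQuantCoeff_map_le [Nonempty X] {L : ℝ≥0} {T : X → Y} (hT : LipschitzWith L T)
    (σ : Measure X) {p : ℝ} (hp : 0 < p) (s : ℝ) :
    upperQuantCoeff (σ.map T) p s ≤ L * upperQuantCoeff σ p s := by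
  rw [upperQuantCoeff, upperQuantCoeff, ← ENNReal.limsup_const_mul_of_ne_top ENNReal.coe_ne_top]
  refine limsup_le_limsup ?_
  filter_upwards [eventually_ge_atTop 1] with N hN
  rw [mul_left_comm]
  gcongr
  exact quantErrN_map_le hT σ hp hN

theorem upperQuantCoeff_of_isEmpty [IsEmpty X] (μ : Measure X) (p s : ℝ) :
    upperQuantCoeff μ p s = ⊤ := by
  have hquant : ∀ N, quantErrN μ p N = ⊤ := fun N =>
    iInf_eq_top.mpr fun S => iInf_eq_top.mpr fun ⟨x, _⟩ => isEmptyElim x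
  have hev : ∀ᶠ N : ℕ in atTop, (N : ℝ≥0∞) ^ (1 / s) * quantErrN μ p N = ⊤ := by
    filter_upwards [eventually_ge_atTop 1] with N hN
    rw [hquant, ENNReal.mul_top]
    exact (ENNReal.rpow_pos (by exact_mod_cast hN) (ENNReal.natCast_ne_top N)).ne'
  rw [upperQuantCoeff, limsup_congr hev, limsup_const]

theorem Quantizable.nonempty {μ : Measure X} {p s : ℝ} (hμ : Quantizable μ p s) : Nonempty X := by
  by_contra hX
  have : IsEmpty X := not_nonempty_iff.mp hX
  have h := hμ (fun _ => 0) (fun _ => Measure.zero_le μ) (by simp)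
  simp only [upperQuantCoeff_of_isEmpty, tendsto_const_nhds_iff] at h
  exact ENNReal.top_ne_zero h

end Quantization

theorem stmt_16_general {X Y : Type*} [MetricSpace X] [MeasurableSpace X] [BorelSpace X]
    [MetricSpace Y] [MeasurableSpace Y] [BorelSpace Y]
    (T : X → Y) (L : ℝ≥0) (hT : LipschitzWith L T)
    (μ : Measure X) [IsFiniteMeasure μ] (p s : ℝ) (hp : 1 ≤ p)
    (hμ : Quantizable μ p s) :
    Quantizable (μ.map T) p s := by
  intro ν hν_le hν_mass
  have := hμ.nonempty
  have hTm : Measurable T := hT.continuous.measurable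
  choose σ hσ_le hσ_map using fun n => Measure.exists_le_map_eq_of_le_map hTm (hν_le n)
  have hσ_mass : Tendsto (fun n => σ n univ) atTop (𝓝 0) := by
    simpa only [← hσ_map, Measure.map_apply hTm MeasurableSet.univ, preimage_univ] using hν_mass
  have hbound : Tendsto (fun n => (L : ℝ≥0∞) * upperQuantCoeff (σ n) p s) atTop (𝓝 0) := by
    simpa using ENNReal.Tendsto.const_mul (hμ σ hσ_le hσ_mass) (Or.inr ENNReal.coe_ne_top)
  refine tendsto_of_tendsto_of_tendsto_of_le_of_le tendsto_const_nhds hbound (fun _ => zero_le)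
    fun n => ?_
  rw [← hσ_map n]
  exact upperQuantCoeff_map_le hT (σ n) (by linarith) s

/-- Lipschitz pushforwards preserve (p,s)-quantizability. -/
theorem stmt_16 {X Y : Type*} [MetricSpace X] [CompleteSpace X]
    [TopologicalSpace.SeparableSpace X] [MeasurableSpace X] [BorelSpace X]
    [MetricSpace Y] [CompleteSpace Y] [TopologicalSpace.SeparableSpace Y]
    [MeasurableSpace Y] [BorelSpace Y]
    (T : X → Y) (L : ℝ≥0) (hT : LipschitzWith L T)
    (μ : Measure X) [IsFiniteMeasure μ] (p s : ℝ) (hp : 1 ≤ p) (hs : 0 < s)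
    (hmom : ∃ x₀ : X, ∫⁻ x, ENNReal.ofReal (dist x x₀ ^ p) ∂μ < ⊤)
    (hμ : Quantizable μ p s) :
    Quantizable (μ.map T) p s :=
  stmt_16_general T L hT μ p s hp hμ
end
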